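/- arXiv:1302.5784 — 7 statements merged into one kernel-verified Lean document; each statement's English description precedes it below -/
import Mathlib

section
/- Let T₁ and T₂ be trees each having at least two vertices, let Δ¹ be their box product T₁ □ T₂ (the graph with vertex set V(T₁)×V(T₂) in which (u₁,u₂) and (w₁,w₂) are adjacent iff u₁ = w₁ and u₂ ∼ w₂, or u₂ = w₂ and u₁ ∼ w₁), fix base vertices v₀ᵢ ∈ Tᵢ and set τᵢ(u) = d(v₀ᵢ, u) mod 2. Call an automorphism g of Δ¹ type-rotating if there exists (i₁,i₂) ∈ (ℤ/2ℤ)² such that, writing g(u₁,u₂) = (x₁,x₂), one has τ₁(x₁) = τ₁(u₁) + i₁ and τ₂(x₂) = τ₂(u₂) + i₂ for all vertices (u₁,u₂). Then an automorphism g of Δ¹ is type-rotating if and only if there exist graph automorphisms g₁ of T₁ and g₂ of T₂ with g(u₁,u₂) = (g₁ u₁, g₂ u₂) for all vertices (u₁,u₂). -/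
open SimpleGraph

private lemma zmod2_add_self (z : ZMod 2) : z + z = 0 := by revert z; decide

private lemma tree_path_length {V : Type*} {G : SimpleGraph V} (ht : G.IsTree) {v a : V}
    {p : G.Walk v a} (hp : p.IsPath) : p.length = G.dist v a := by
  classical
  refine le_antisymm ?_ (SimpleGraph.dist_le p)
  obtain ⟨w, hw⟩ := ht.isConnected.exists_walk_length_eq_dist v a
  have huniq := (ht.existsUnique_path v a).unique hp w.bypass_isPath
  rw [huniq]
  calc w.bypass.length ≤ w.length := w.length_bypass_le
  _ = _ := hw

private lemma tree_adj_dist {V : Type*} {G : SimpleGraph V} (ht : G.IsTree) (v : V) {a b : V}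
    (hab : G.Adj a b) :
    G.dist v b = G.dist v a + 1 ∨ G.dist v a = G.dist v b + 1 := by
  classical
  obtain ⟨p, hp, -⟩ := ht.existsUnique_path v a
  by_cases hb : b ∈ p.support
  · right
    have hq : (p.takeUntil b hb).IsPath := hp.takeUntil hb
    have hr : (p.dropUntil b hb).IsPath := hp.dropUntil hb
    have he : (Walk.cons hab.symm Walk.nil : G.Walk b a).IsPath := by
      simp [Walk.cons_isPath_iff, hab.ne']
    have hre : p.dropUntil b hb = Walk.cons hab.symm Walk.nil :=
      (ht.existsUnique_path b a).unique hr he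
    have hlen : p.length = (p.takeUntil b hb).length + (p.dropUntil b hb).length := by
      conv_lhs => rw [← Walk.take_spec p hb]
      rw [Walk.length_append]
    have h1 : p.length = G.dist v a := tree_path_length ht hp
    have h2 : (p.takeUntil b hb).length = G.dist v b := tree_path_length ht hq
    rw [← h1, ← h2, hlen, hre]
    simp
  · left
    have hq : ((Walk.cons hab.symm p.reverse).reverse).IsPath := by
      refine Walk.IsPath.reverse ?_
      exact hp.reverse.cons (by simpa using hb)
    have h2 : ((Walk.cons hab.symm p.reverse).reverse).length = G.dist v b :=
      tree_path_length ht hq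
    have h1 : p.length = G.dist v a := tree_path_length ht hp
    rw [← h1, ← h2]
    simp

private lemma adj_parity {V : Type*} {G : SimpleGraph V} (ht : G.IsTree) (v : V) {a b : V}
    (hab : G.Adj a b) :
    ((G.dist v b : ℕ) : ZMod 2) = ((G.dist v a : ℕ) : ZMod 2) + 1 := by
  have key : ∀ x y : ZMod 2, x = y + 1 → y = x + 1 := by decide
  rcases tree_adj_dist ht v hab with h | h
  · rw [h]; push_cast; ring
  · refine key _ _ ?_
    rw [h]; push_cast; ring

private lemma walk_parity {V : Type*} {G : SimpleGraph V} (ht : G.IsTree) (v : V) :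
    ∀ {x y : V} (w : G.Walk x y),
      ((w.length : ℕ) : ZMod 2) = ((G.dist v x : ℕ) : ZMod 2) + ((G.dist v y : ℕ) : ZMod 2) := by
  intro x y w
  induction w with
  | nil => simpa using (zmod2_add_self _).symm
  | @cons x' y' z' h w ih =>
    have hp := adj_parity ht v h
    rw [Walk.length_cons]
    push_cast
    rw [ih, hp]
    have key2 : ∀ a b : ZMod 2, a + 1 + b + 1 = a + b := by decide
    exact key2 _ _

private lemma dist_parity {V : Type*} {G : SimpleGraph V} (ht : G.IsTree) (v x y : V) :
    ((G.dist x y : ℕ) : ZMod 2) = ((G.dist v x : ℕ) : ZMod 2) + ((G.dist v y : ℕ) : ZMod 2) := by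
  obtain ⟨w, hw⟩ := ht.isConnected.exists_walk_length_eq_dist x y
  rw [← hw]
  exact walk_parity ht v w

private lemma iso_dist {V : Type*} {G : SimpleGraph V} (hc : G.Connected) (f : G ≃g G)
    (u v : V) : G.dist (f u) (f v) = G.dist u v := by
  have key : ∀ (f : G ≃g G) (u v : V), G.dist (f u) (f v) ≤ G.dist u v := by
    intro f u v
    obtain ⟨w, hw⟩ := hc.exists_walk_length_eq_dist u v
    calc G.dist (f u) (f v) ≤ (w.map f.toHom).length := SimpleGraph.dist_le _
    _ = G.dist u v := by rw [Walk.length_map, hw]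
  refine le_antisymm (key f u v) ?_
  have := key f.symm (f u) (f v)
  simpa using this

private lemma const_of_adj {V α : Type*} {G : SimpleGraph V} (hc : G.Connected) (f : V → α)
    (h : ∀ a b, G.Adj a b → f a = f b) (x y : V) : f x = f y := by
  obtain ⟨w⟩ := hc x y
  induction w with
  | nil => rfl
  | cons h' p ih => exact (h _ _ h').trans ih

private lemma aux_prod {V₁ V₂ : Type*} {T₁ : SimpleGraph V₁} {T₂ : SimpleGraph V₂}
    (h₁ : T₁.IsTree) (h₂ : T₂.IsTree) (v₁ : V₁) (v₂ : V₂)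
    (e : T₁.boxProd T₂ ≃g T₁.boxProd T₂) (i₁ i₂ : ZMod 2)
    (he : ∀ u : V₁ × V₂,
        ((T₁.dist v₁ (e u).1 : ZMod 2) = (T₁.dist v₁ u.1 : ZMod 2) + i₁) ∧
        ((T₂.dist v₂ (e u).2 : ZMod 2) = (T₂.dist v₂ u.2 : ZMod 2) + i₂)) :
    ∃ (f₁ : V₁ → V₁) (f₂ : V₂ → V₂),
      (∀ u : V₁ × V₂, e u = (f₁ u.1, f₂ u.2)) ∧
      (∀ a b, T₁.Adj a b → T₁.Adj (f₁ a) (f₁ b)) ∧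
      (∀ a b, T₂.Adj a b → T₂.Adj (f₂ a) (f₂ b)) := by
  have hne : ∀ z : ZMod 2, z ≠ z + 1 := by decide
  have key₂ : ∀ (u₁ : V₁) (a b : V₂), T₂.Adj a b →
      (e (u₁, a)).1 = (e (u₁, b)).1 ∧ T₂.Adj (e (u₁, a)).2 (e (u₁, b)).2 := by
    intro u₁ a b hab
    have hadj : (T₁.boxProd T₂).Adj (e (u₁, a)) (e (u₁, b)) :=
      e.map_adj_iff.mpr (boxProd_adj_right.mpr hab)
    rcases boxProd_adj.mp hadj with ⟨h1, h2⟩ | ⟨h2, h1⟩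
    · exfalso
      have pa := (he (u₁, a)).2
      have pb := (he (u₁, b)).2
      rw [h2, pb] at pa
      have pa' : (T₂.dist v₂ b : ZMod 2) + i₂ = (T₂.dist v₂ a : ZMod 2) + i₂ := pa
      have hcan : (T₂.dist v₂ b : ZMod 2) = (T₂.dist v₂ a : ZMod 2) := add_right_cancel pa'
      rw [adj_parity h₂ v₂ hab] at hcan
      exact hne _ hcan.symm
    · exact ⟨h1, h2⟩
  have key₁ : ∀ (u₂ : V₂) (a b : V₁), T₁.Adj a b →
      (e (a, u₂)).2 = (e (b, u₂)).2 ∧ T₁.Adj (e (a, u₂)).1 (e (b, u₂)).1 := by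
    intro u₂ a b hab
    have hadj : (T₁.boxProd T₂).Adj (e (a, u₂)) (e (b, u₂)) :=
      e.map_adj_iff.mpr (boxProd_adj_left.mpr hab)
    rcases boxProd_adj.mp hadj with ⟨h1, h2⟩ | ⟨h2, h1⟩
    · exact ⟨h2, h1⟩
    · exfalso
      have pa := (he (a, u₂)).1
      have pb := (he (b, u₂)).1
      rw [h1, pb] at pa
      have pa' : (T₁.dist v₁ b : ZMod 2) + i₁ = (T₁.dist v₁ a : ZMod 2) + i₁ := pa
      have hcan : (T₁.dist v₁ b : ZMod 2) = (T₁.dist v₁ a : ZMod 2) := add_right_cancel pa'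
      rw [adj_parity h₁ v₁ hab] at hcan
      exact hne _ hcan.symm
  refine ⟨fun x => (e (x, v₂)).1, fun y => (e (v₁, y)).2, ?_, ?_, ?_⟩
  · intro u
    have c1 : (e (u.1, u.2)).1 = (e (u.1, v₂)).1 :=
      const_of_adj h₂.isConnected (fun y => (e (u.1, y)).1)
        (fun a b hab => (key₂ u.1 a b hab).1) u.2 v₂
    have c2 : (e (u.1, u.2)).2 = (e (v₁, u.2)).2 :=
      const_of_adj h₁.isConnected (fun x => (e (x, u.2)).2)
        (fun a b hab => (key₁ u.2 a b hab).1) u.1 v₁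
    exact Prod.ext c1 c2
  · exact fun a b hab => (key₁ v₂ a b hab).2
  · exact fun a b hab => (key₂ v₁ a b hab).2

/-- An automorphism of the box product of two trees (each with at
least two vertices) is type-rotating iff it is a cartesian product of
automorphisms of the factors. -/
theorem boxProd_aut_typeRotating_iff_prod {V₁ V₂ : Type*}
    [Nontrivial V₁] [Nontrivial V₂]
    (T₁ : SimpleGraph V₁) (T₂ : SimpleGraph V₂)
    (h₁ : T₁.IsTree) (h₂ : T₂.IsTree)
    (v₁ : V₁) (v₂ : V₂)
    (g : T₁.boxProd T₂ ≃g T₁.boxProd T₂) :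
    (∃ i₁ i₂ : ZMod 2, ∀ u : V₁ × V₂,
        ((T₁.dist v₁ (g u).1 : ZMod 2) = (T₁.dist v₁ u.1 : ZMod 2) + i₁) ∧
        ((T₂.dist v₂ (g u).2 : ZMod 2) = (T₂.dist v₂ u.2 : ZMod 2) + i₂)) ↔
      (∃ (g₁ : T₁ ≃g T₁) (g₂ : T₂ ≃g T₂),
        ∀ u : V₁ × V₂, g u = (g₁ u.1, g₂ u.2)) := by
  constructor
  · rintro ⟨i₁, i₂, hg⟩
    obtain ⟨f₁, f₂, hf, hf₁, hf₂⟩ := aux_prod h₁ h₂ v₁ v₂ g i₁ i₂ hg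
    have hg' : ∀ u : V₁ × V₂,
        ((T₁.dist v₁ (g.symm u).1 : ZMod 2) = (T₁.dist v₁ u.1 : ZMod 2) + i₁) ∧
        ((T₂.dist v₂ (g.symm u).2 : ZMod 2) = (T₂.dist v₂ u.2 : ZMod 2) + i₂) := by
      intro u
      have h := hg (g.symm u)
      rw [g.apply_symm_apply] at h
      have key : ∀ a b c : ZMod 2, a = b + c → b = a + c := by decide
      exact ⟨key _ _ _ h.1, key _ _ _ h.2⟩
    obtain ⟨k₁, k₂, hk, hk₁, hk₂⟩ := aux_prod h₁ h₂ v₁ v₂ g.symm i₁ i₂ hg'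
    have li₁ : ∀ x, k₁ (f₁ x) = x := by
      intro x
      have h := hk (g (x, v₂))
      rw [g.symm_apply_apply, hf (x, v₂)] at h
      exact (congrArg Prod.fst h).symm
    have li₂ : ∀ x, k₂ (f₂ x) = x := by
      intro x
      have h := hk (g (v₁, x))
      rw [g.symm_apply_apply, hf (v₁, x)] at h
      exact (congrArg Prod.snd h).symm
    have ri₁ : ∀ y, f₁ (k₁ y) = y := by
      intro y
      have h := hf (g.symm (y, v₂))
      rw [g.apply_symm_apply, hk (y, v₂)] at h
      exact (congrArg Prod.fst h).symm
    have ri₂ : ∀ y, f₂ (k₂ y) = y := by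
      intro y
      have h := hf (g.symm (v₁, y))
      rw [g.apply_symm_apply, hk (v₁, y)] at h
      exact (congrArg Prod.snd h).symm
    refine ⟨⟨⟨f₁, k₁, li₁, ri₁⟩, ?_⟩, ⟨⟨f₂, k₂, li₂, ri₂⟩, ?_⟩, ?_⟩
    · intro a b
      constructor
      · intro h
        have h' : T₁.Adj (f₁ a) (f₁ b) := h
        have := hk₁ _ _ h'
        rwa [li₁, li₁] at this
      · exact fun h => hf₁ a b h
    · intro a b
      constructor
      · intro h
        have h' : T₂.Adj (f₂ a) (f₂ b) := h
        have := hk₂ _ _ h'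
        rwa [li₂, li₂] at this
      · exact fun h => hf₂ a b h
    · intro u
      rw [hf u]
      rfl
  · rintro ⟨g₁, g₂, hg⟩
    refine ⟨(T₁.dist v₁ (g₁ v₁) : ZMod 2), (T₂.dist v₂ (g₂ v₂) : ZMod 2), fun u => ⟨?_, ?_⟩⟩
    · have hC := dist_parity h₁ v₁ (g₁ v₁) (g₁ u.1)
      rw [iso_dist h₁.isConnected g₁ v₁ u.1] at hC
      have key : ∀ a b c : ZMod 2, a = b + c → c = a + b := by decide
      have := key _ _ _ hC
      rw [hg u]
      exact this
    · have hC := dist_parity h₂ v₂ (g₂ v₂) (g₂ u.2)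
      rw [iso_dist h₂.isConnected g₂ v₂ u.2] at hC
      have key : ∀ a b c : ZMod 2, a = b + c → c = a + b := by decide
      have := key _ _ _ hC
      rw [hg u]
      exact this
end

section
/- Let T₁ and T₂ be trees and let Γ be a subgroup of Aut(T₁) × Aut(T₂), acting componentwise on V(T₁)×V(T₂); assume this action is free and transitive on V(T₁)×V(T₂). Fix v₀ = (v₁,v₂) ∈ V(T₁)×V(T₂), and for g = (g₁,g₂) ∈ Γ define sh(g) = (d(v₁, g₁ v₁), d(v₂, g₂ v₂)). Let A = { g ∈ Γ : sh(g) = (1,0) } and B = { g ∈ Γ : sh(g) = (0,1) }. Then for every g ∈ Γ with sh(g) = (m,n) there exists a unique pair of finite sequences (a₁,…,a_m) ∈ Aᵐ and (b₁,…,b_n) ∈ Bⁿ with g = a₁⋯a_m·b₁⋯b_n, and also a unique pair (b′₁,…,b′_n) ∈ Bⁿ and (a′₁,…,a′_m) ∈ Aᵐ with g = b′₁⋯b′_n·a′₁⋯a′_m. -/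
/-!
Since `Γ` acts simply transitively, an element of `Γ` is determined by where it sends
`v₀ = (v₁, v₂)`; and `sh` is subadditive, automorphisms being isometries. If `sh(g) = (m + 1, n)`
and `z` is the neighbour of `v₁` on the geodesic to `g₁ v₁`, the element sending `v₀` to `(z, v₂)`
lies in `A` and splits off `g` leaving shape `(m, n)`. Conversely, in any word for `g` that starts
with a letter of `A` and has `m + 1` letters of `A` and `n` of `B`, the rest of the word moves `v₁`
by at most `m`, so the first letter sends `v₁` to a neighbour within distance `m` of `g₁ v₁`; in a
tree that neighbour is `z`. Peeling off letters one at a time gives, for every arrangement of `m`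
letters of `A` and `n` of `B`, exactly one word in that arrangement representing `g`; the normal
forms are the arrangements `AᵐBⁿ` and `BⁿAᵐ`.
-/

namespace SimpleGraph

variable {V W : Type*} {G : SimpleGraph V} {H : SimpleGraph W}

lemma Hom.edist_le (f : G →g H) (u v : V) : H.edist (f u) (f v) ≤ G.edist u v :=
  le_iInf fun p => (SimpleGraph.edist_le (p.map f)).trans (by simp)

lemma Iso.dist_eq (e : G ≃g H) (u v : V) : H.dist (e u) (e v) = G.dist u v := by
  have : H.edist (e u) (e v) = G.edist u v :=
    le_antisymm (e.toHom.edist_le u v) (by simpa using e.symm.toHom.edist_le (e u) (e v))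
  rw [dist, dist, this]

variable {v y z z' : V} {k : ℕ}

lemma dist_inv_mul_apply (e f : G ≃g G) : G.dist v ((e⁻¹ * f) v) = G.dist (e v) (f v) := by
  rw [← e.dist_eq, RelIso.mul_apply, RelIso.apply_inv_self]

lemma dist_inv_apply (e : G ≃g G) : G.dist v (e⁻¹ v) = G.dist v (e v) := by
  simpa [dist_comm] using dist_inv_mul_apply (v := v) e 1

lemma Connected.dist_mul_apply_le (hG : G.Connected) (e f : G ≃g G) :
    G.dist v ((e * f) v) ≤ G.dist v (e v) + G.dist v (f v) :=
  calc G.dist v (e (f v)) ≤ G.dist v (e v) + G.dist (e v) (e (f v)) := hG.dist_triangle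
    _ = G.dist v (e v) + G.dist v (f v) := by rw [e.dist_eq]

lemma IsTree.eq_of_adj_of_dist_lt (hG : G.IsTree) (hz : G.Adj v z) (hz' : G.Adj v z')
    (h : G.dist z y < G.dist v y) (h' : G.dist z' y < G.dist v y) : z = z' := by
  obtain ⟨p, hp⟩ := hG.connected.exists_walk_length_eq_dist z y
  obtain ⟨p', hp'⟩ := hG.connected.exists_walk_length_eq_dist z' y
  have hgeod : (p.cons hz).length = G.dist v y :=
    le_antisymm (by rw [Walk.length_cons]; omega) (dist_le _)
  have hgeod' : (p'.cons hz').length = G.dist v y :=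
    le_antisymm (by rw [Walk.length_cons]; omega) (dist_le _)
  have := congrArg (fun q : G.Path v y => (q : G.Walk v y).getVert 1)
    ((hG.isAcyclic.subsingleton_path v y).elim ⟨_, Walk.isPath_of_length_eq_dist _ hgeod⟩
      ⟨_, Walk.isPath_of_length_eq_dist _ hgeod'⟩)
  simpa using this

lemma IsTree.existsUnique_adj_dist_le (hG : G.IsTree) (h : G.dist v y = k + 1) :
    ∃! z, G.Adj v z ∧ G.dist z y ≤ k := by
  obtain ⟨p, hp⟩ := hG.connected.exists_walk_length_eq_dist v y
  rw [h] at hp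
  cases p with
  | nil => simp at hp
  | cons hadj q =>
    have hq : G.dist _ y ≤ k := (dist_le q).trans (by rw [Walk.length_cons] at hp; omega)
    exact ⟨_, ⟨hadj, hq⟩, fun z' hz' =>
      hG.eq_of_adj_of_dist_lt (y := y) hz'.1 hadj (by omega) (by omega)⟩

end SimpleGraph

open SimpleGraph

section NormalForm

variable {V₁ V₂ : Type*} {T₁ : SimpleGraph V₁} {T₂ : SimpleGraph V₂}

/-- `shape v₁ v₂ true g` and `shape v₁ v₂ false g` are the two components of `sh(g)`. -/
noncomputable def shape (v₁ : V₁) (v₂ : V₂) : Bool → (T₁ ≃g T₁) × (T₂ ≃g T₂) → ℕ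
  | true, g => T₁.dist v₁ (g.1 v₁)
  | false, g => T₂.dist v₂ (g.2 v₂)

/-- `letter Γ v₁ v₂ true` is `A` and `letter Γ v₁ v₂ false` is `B`. -/
def letter (Γ : Subgroup ((T₁ ≃g T₁) × (T₂ ≃g T₂))) (v₁ : V₁) (v₂ : V₂) (b : Bool) :
    Set ((T₁ ≃g T₁) × (T₂ ≃g T₂)) :=
  {g | g ∈ Γ ∧ shape v₁ v₂ b g = 1 ∧ shape v₁ v₂ (!b) g = 0}

variable {Γ : Subgroup ((T₁ ≃g T₁) × (T₂ ≃g T₂))} {v₁ : V₁} {v₂ : V₂}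

lemma shape_mul_le (h₁ : T₁.Connected) (h₂ : T₂.Connected) (b : Bool)
    (x y : (T₁ ≃g T₁) × (T₂ ≃g T₂)) :
    shape v₁ v₂ b (x * y) ≤ shape v₁ v₂ b x + shape v₁ v₂ b y := by
  cases b
  · exact h₂.dist_mul_apply_le x.2 y.2
  · exact h₁.dist_mul_apply_le x.1 y.1

lemma shape_inv (b : Bool) (x : (T₁ ≃g T₁) × (T₂ ≃g T₂)) :
    shape v₁ v₂ b x⁻¹ = shape v₁ v₂ b x := by
  cases b
  · exact dist_inv_apply x.2
  · exact dist_inv_apply x.1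

lemma shape_inv_mul_of_shape_eq_zero (h₁ : T₁.Connected) (h₂ : T₂.Connected) {b : Bool}
    {x : (T₁ ≃g T₁) × (T₂ ≃g T₂)} (hx : shape v₁ v₂ b x = 0) (g : (T₁ ≃g T₁) × (T₂ ≃g T₂)) :
    shape v₁ v₂ b (x⁻¹ * g) = shape v₁ v₂ b g := by
  have hle := shape_mul_le (v₁ := v₁) (v₂ := v₂) h₁ h₂ b x⁻¹ g
  have hge := shape_mul_le (v₁ := v₁) (v₂ := v₂) h₁ h₂ b x (x⁻¹ * g)
  rw [shape_inv, mul_inv_cancel_left] at *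
  omega

lemma shape_prod_le (h₁ : T₁.Connected) (h₂ : T₂.Connected) {k : ℕ} (σ : Fin k → Bool)
    (w : Fin k → (T₁ ≃g T₁) × (T₂ ≃g T₂)) (hw : ∀ i, w i ∈ letter Γ v₁ v₂ (σ i)) (b : Bool) :
    shape v₁ v₂ b (List.ofFn w).prod ≤ (List.ofFn σ).count b := by
  induction k with
  | zero => cases b <;> simp [shape]
  | succ k ih =>
    have h0 : shape v₁ v₂ b (w 0) = if σ 0 = b then 1 else 0 := by
      obtain ⟨-, h1, h0⟩ := hw 0
      split_ifs with h <;> [subst h; rw [Bool.eq_not_of_ne (Ne.symm h)]] <;> assumption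
    simp only [List.ofFn_succ, List.prod_cons, List.count_cons, beq_iff_eq]
    grw [shape_mul_le h₁ h₂, h0, ih (fun i => σ i.succ) (fun i => w i.succ) (fun i => hw i.succ)]
    omega

lemma existsUnique_mem_apply_eq
    (hfree : ∀ g ∈ Γ, (∃ u : V₁ × V₂, (g.1 u.1, g.2 u.2) = u) → g = 1)
    (htrans : ∀ u w : V₁ × V₂, ∃ g ∈ Γ, (g.1 u.1, g.2 u.2) = w) (u w : V₁ × V₂) :
    ∃! g, g ∈ Γ ∧ (g.1 u.1, g.2 u.2) = w := by
  obtain ⟨a, ha, haw⟩ := htrans u w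
  refine ⟨a, ⟨ha, haw⟩, fun x ⟨hx, hxw⟩ => ?_⟩
  refine (inv_mul_eq_one.mp (hfree _ (mul_mem (inv_mem ha) hx) ⟨u, ?_⟩)).symm
  rw [← haw] at hxw
  simp only [Prod.mk.injEq] at hxw ⊢
  simp [RelIso.mul_apply, hxw]

lemma eq_one_of_shape_eq_zero (h₁ : T₁.Connected) (h₂ : T₂.Connected)
    (hfree : ∀ g ∈ Γ, (∃ u : V₁ × V₂, (g.1 u.1, g.2 u.2) = u) → g = 1)
    {g : (T₁ ≃g T₁) × (T₂ ≃g T₂)} (hg : g ∈ Γ) (h : ∀ b, shape v₁ v₂ b g = 0) : g = 1 :=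
  hfree g hg ⟨(v₁, v₂), Prod.ext ((h₁.dist_eq_zero_iff.mp (h true)).symm)
    ((h₂.dist_eq_zero_iff.mp (h false)).symm)⟩

/-- The unique such `a` sends `(v₁, v₂)` to its neighbour on the geodesic towards
`(g.1 v₁, g.2 v₂)` in the `c`-coordinate. -/
lemma existsUnique_first_letter (h₁ : T₁.IsTree) (h₂ : T₂.IsTree)
    (hfree : ∀ g ∈ Γ, (∃ u : V₁ × V₂, (g.1 u.1, g.2 u.2) = u) → g = 1)
    (htrans : ∀ u w : V₁ × V₂, ∃ g ∈ Γ, (g.1 u.1, g.2 u.2) = w) (c : Bool)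
    {g : (T₁ ≃g T₁) × (T₂ ≃g T₂)} {k : ℕ} (hk : shape v₁ v₂ c g = k + 1) :
    ∃! a, a ∈ letter Γ v₁ v₂ c ∧ shape v₁ v₂ c (a⁻¹ * g) ≤ k := by
  cases c
  · obtain ⟨z, hz, hz_uniq⟩ := h₂.existsUnique_adj_dist_le hk
    refine (existsUnique_congr fun x => ?_).2
      (existsUnique_mem_apply_eq hfree htrans (v₁, v₂) (v₁, z))
    simp only [letter, shape, Set.mem_ofPred_eq, Bool.not_false, Prod.snd_mul, Prod.snd_inv,
      dist_inv_mul_apply, dist_eq_one_iff_adj, h₁.connected.dist_eq_zero_iff, Prod.mk.injEq]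
    have := hz_uniq (x.2 v₂)
    grind
  · obtain ⟨z, hz, hz_uniq⟩ := h₁.existsUnique_adj_dist_le hk
    refine (existsUnique_congr fun x => ?_).2
      (existsUnique_mem_apply_eq hfree htrans (v₁, v₂) (z, v₂))
    simp only [letter, shape, Set.mem_ofPred_eq, Bool.not_true, Prod.fst_mul, Prod.fst_inv,
      dist_inv_mul_apply, dist_eq_one_iff_adj, h₂.connected.dist_eq_zero_iff, Prod.mk.injEq]
    have := hz_uniq (x.1 v₁)
    grind

theorem existsUnique_factorization (h₁ : T₁.IsTree) (h₂ : T₂.IsTree)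
    (hfree : ∀ g ∈ Γ, (∃ u : V₁ × V₂, (g.1 u.1, g.2 u.2) = u) → g = 1)
    (htrans : ∀ u w : V₁ × V₂, ∃ g ∈ Γ, (g.1 u.1, g.2 u.2) = w) {k : ℕ} (σ : Fin k → Bool)
    {g : (T₁ ≃g T₁) × (T₂ ≃g T₂)} (hg : g ∈ Γ)
    (hσ : ∀ b, shape v₁ v₂ b g = (List.ofFn σ).count b) :
    ∃! w : Fin k → (T₁ ≃g T₁) × (T₂ ≃g T₂),
      (∀ i, w i ∈ letter Γ v₁ v₂ (σ i)) ∧ g = (List.ofFn w).prod := by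
  induction k generalizing g with
  | zero =>
    have hg1 : g = 1 :=
      eq_one_of_shape_eq_zero h₁.connected h₂.connected hfree hg (by simpa using hσ)
    exact ⟨Fin.elim0, by simp [hg1], fun w _ => funext fun i => i.elim0⟩
  | succ k ih =>
    obtain ⟨c, τ, rfl⟩ : ∃ c τ, σ = Fin.cons c τ := ⟨_, _, (Fin.cons_self_tail σ).symm⟩
    have hcount (b : Bool) :
        shape v₁ v₂ b g = (List.ofFn τ).count b + if c = b then 1 else 0 := by
      simp [hσ, List.ofFn_succ, List.count_cons]
    obtain ⟨a, ⟨haA, ha_le⟩, ha_uniq⟩ :=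
      existsUnique_first_letter h₁ h₂ hfree htrans c (by simpa using hcount c)
    have ha_shape (b : Bool) : shape v₁ v₂ b (a⁻¹ * g) = (List.ofFn τ).count b := by
      by_cases hb : c = b
      · subst hb
        have := shape_mul_le (v₁ := v₁) (v₂ := v₂) h₁.connected h₂.connected c a (a⁻¹ * g)
        simp only [mul_inv_cancel_left, hcount, haA.2.1, if_pos] at this
        omega
      · rw [Bool.eq_not_of_ne (Ne.symm hb), shape_inv_mul_of_shape_eq_zero h₁.connected
          h₂.connected haA.2.2, ← Bool.eq_not_of_ne (Ne.symm hb), hcount, if_neg hb, add_zero]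
    obtain ⟨w, ⟨hw, hwg⟩, hw_uniq⟩ := ih τ (mul_mem (inv_mem haA.1) hg) ha_shape
    refine ⟨Fin.cons a w, ⟨Fin.forall_fin_succ.2 ⟨haA, hw⟩, ?_⟩, ?_⟩
    · simp [List.ofFn_succ, ← hwg]
    rintro w' ⟨hw', rfl⟩
    obtain ⟨x, u, rfl⟩ : ∃ x u, w' = Fin.cons x u := ⟨_, _, (Fin.cons_self_tail w').symm⟩
    simp only [Fin.forall_fin_succ, Fin.cons_zero, Fin.cons_succ] at hw'
    have hprod : (List.ofFn (Fin.cons x u : Fin (k + 1) → _)).prod = x * (List.ofFn u).prod := by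
      simp [List.ofFn_succ]
    have hx : x = a := ha_uniq x ⟨hw'.1, by
      simpa [hprod] using shape_prod_le h₁.connected h₂.connected τ u hw'.2 c⟩
    subst hx
    rw [hw_uniq u ⟨hw'.2, by rw [hprod, inv_mul_cancel_left]⟩]

theorem existsUnique_block_factorization (h₁ : T₁.IsTree) (h₂ : T₂.IsTree)
    (hfree : ∀ g ∈ Γ, (∃ u : V₁ × V₂, (g.1 u.1, g.2 u.2) = u) → g = 1)
    (htrans : ∀ u w : V₁ × V₂, ∃ g ∈ Γ, (g.1 u.1, g.2 u.2) = w) (b : Bool)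
    {g : (T₁ ≃g T₁) × (T₂ ≃g T₂)} (hg : g ∈ Γ) {m n : ℕ}
    (hm : shape v₁ v₂ b g = m) (hn : shape v₁ v₂ (!b) g = n) :
    ∃! p : (Fin m → (T₁ ≃g T₁) × (T₂ ≃g T₂)) × (Fin n → (T₁ ≃g T₁) × (T₂ ≃g T₂)),
      (∀ i, p.1 i ∈ letter Γ v₁ v₂ b) ∧ (∀ j, p.2 j ∈ letter Γ v₁ v₂ (!b)) ∧
        g = (List.ofFn p.1).prod * (List.ofFn p.2).prod := by
  have hcount (c : Bool) : shape v₁ v₂ c g =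
      (List.ofFn (Fin.append (fun _ : Fin m => b) (fun _ : Fin n => !b))).count c := by
    cases b <;> cases c <;> simp_all [List.ofFn_fin_append, List.count_replicate]
  refine ((Fin.appendEquiv m n).existsUnique_congr fun p => ?_).2
    (existsUnique_factorization h₁ h₂ hfree htrans _ hg hcount)
  simp [Fin.appendEquiv, Fin.forall_fin_add, List.ofFn_fin_append, and_assoc]

end NormalForm

/-- Normal form for elements of a group acting freely and
transitively on the vertex set of a product of two trees: each `g ∈ Γ` of shape
`(m,n)` has unique expressions `g = a₁⋯a_m b₁⋯b_n` and `g = b′₁⋯b′_n a′₁⋯a′_m`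
with `aᵢ, a′ᵢ ∈ A` and `bⱼ, b′ⱼ ∈ B`. -/
theorem normal_form {V₁ V₂ : Type*}
    (T₁ : SimpleGraph V₁) (T₂ : SimpleGraph V₂)
    (h₁ : T₁.IsTree) (h₂ : T₂.IsTree)
    (Γ : Subgroup ((T₁ ≃g T₁) × (T₂ ≃g T₂)))
    (hfree : ∀ g ∈ Γ, (∃ u : V₁ × V₂, (g.1 u.1, g.2 u.2) = u) → g = 1)
    (htrans : ∀ u w : V₁ × V₂, ∃ g ∈ Γ, (g.1 u.1, g.2 u.2) = w)
    (v₁ : V₁) (v₂ : V₂)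
    (A B : Set ((T₁ ≃g T₁) × (T₂ ≃g T₂)))
    (hA : A = {g | g ∈ Γ ∧ T₁.dist v₁ (g.1 v₁) = 1 ∧ T₂.dist v₂ (g.2 v₂) = 0})
    (hB : B = {g | g ∈ Γ ∧ T₁.dist v₁ (g.1 v₁) = 0 ∧ T₂.dist v₂ (g.2 v₂) = 1})
    (g : (T₁ ≃g T₁) × (T₂ ≃g T₂)) (hg : g ∈ Γ) (m n : ℕ)
    (hm : T₁.dist v₁ (g.1 v₁) = m) (hn : T₂.dist v₂ (g.2 v₂) = n) :
    (∃! p : (Fin m → (T₁ ≃g T₁) × (T₂ ≃g T₂)) × (Fin n → (T₁ ≃g T₁) × (T₂ ≃g T₂)),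
      (∀ i, p.1 i ∈ A) ∧ (∀ j, p.2 j ∈ B) ∧
        g = (List.ofFn p.1).prod * (List.ofFn p.2).prod) ∧
    (∃! q : (Fin n → (T₁ ≃g T₁) × (T₂ ≃g T₂)) × (Fin m → (T₁ ≃g T₁) × (T₂ ≃g T₂)),
      (∀ j, q.1 j ∈ B) ∧ (∀ i, q.2 i ∈ A) ∧
        g = (List.ofFn q.1).prod * (List.ofFn q.2).prod) := by
  have hA' : A = letter Γ v₁ v₂ true := hA
  have hB' : B = letter Γ v₁ v₂ false := by
    rw [hB]; ext; exact and_congr_right fun _ => and_comm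
  subst hA' hB'
  exact ⟨existsUnique_block_factorization h₁ h₂ hfree htrans true hg hm hn,
    existsUnique_block_factorization h₁ h₂ hfree htrans false hg hn hm⟩
end

section
/- Let T₁ and T₂ be trees in which every vertex of T₁ has degree m and every vertex of T₂ has degree n. Let Γ be a torsion-free subgroup of Aut(T₁) × Aut(T₂), acting componentwise on V(T₁)×V(T₂), and assume this action is free and transitive. Fix v₀ = (v₁,v₂), define sh(g) = (d(v₁,g₁v₁), d(v₂,g₂v₂)) for g = (g₁,g₂) ∈ Γ, and set A = {g ∈ Γ : sh(g)=(1,0)}, B = {g ∈ Γ : sh(g)=(0,1)}, and R = {(a,b,b′,a′) ∈ A×B×B×A : a·b = b′·a′ in Γ}. Then: (1) |A| = m and |B| = n; (2) A and B are closed under inversion, and g⁻¹ ≠ g for all g ∈ A ∪ B (so the involution g ↦ g⁻¹ is fixed-point free on A and on B, and in particular m and n are even); (3) if (a,b,b′,a′) ∈ R then (a⁻¹,b′,b,a′⁻¹), (a′⁻¹,b′⁻¹,b⁻¹,a⁻¹) and (a′,b⁻¹,b′⁻¹,a) belong to R; (4) (a,b,b⁻¹,a⁻¹) ∉ R for all a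 ∈ A, b ∈ B; (5) each of the four projections R → A×B given by (a,b,b′,a′) ↦ (a,b), (a,b′), (a′,b), (a′,b′) is a bijection onto A×B; and (6) A ∪ B generates Γ. -/
/-!
The orbit map `g ↦ g • (v₁, v₂)` is a bijection from `Γ` onto `V₁ × V₂`. Under it, `A` and `B`
correspond to the neighbours of `v₁` in `T₁` and of `v₂` in `T₂`, which gives their sizes and
their closure under inversion. For `a ∈ A`, `b ∈ B` the product `a * b` moves the base vertex to a
"diagonal" neighbour `(a v₁, a b v₂)`, and that vertex is reached in exactly one way as `b' * a'`
(first a vertical, then a horizontal step); so `(a, b, b', a') ↦ (a, b)` is a bijection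
`R → A × B`, and the other three projections are this one composed with symmetries of the square.
Torsion-freeness rules out involutions, hence `g⁻¹ ≠ g` and `(a * b)⁻¹ ≠ a * b`. Finally, the
orbit of `(v₁, v₂)` under the subgroup generated by `A ∪ B` is closed under steps along edges of
either tree, so by connectedness it is everything, and freeness turns this into generation.
-/

open Set Function Pointwise

theorem SimpleGraph.Preconnected.forall_of_forall_adj {V : Type*} {G : SimpleGraph V}
    (hG : G.Preconnected) {P : V → Prop} {v : V} (hv : P v)
    (h : ∀ x y, G.Adj x y → P x → P y) (u : V) : P u := by
  induction (G.reachable_iff_reflTransGen v u).mp (hG v u) with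
  | refl => exact hv
  | tail _ hxy ih => exact h _ _ hxy ih

theorem SimpleGraph.Iso.inv_apply_eq_self_iff {V : Type*} {G : SimpleGraph V} (φ : G ≃g G)
    {v : V} : φ⁻¹ v = v ↔ φ v = v :=
  φ.symm_apply_eq.trans eq_comm

theorem SimpleGraph.Iso.adj_inv_apply_iff {V : Type*} {G : SimpleGraph V} (φ : G ≃g G)
    {v : V} : G.Adj v (φ⁻¹ v) ↔ G.Adj v (φ v) := by
  rw [← φ.map_adj_iff, RelIso.apply_inv_self, G.adj_comm]

theorem SimpleGraph.Iso.adj_apply_iff_of_apply_eq_self {V : Type*} {G : SimpleGraph V}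
    (φ : G ≃g G) {v : V} (hv : φ v = v) {x : V} : G.Adj v (φ x) ↔ G.Adj v x := by
  rw [← φ.map_adj_iff (v := v) (w := x), hv]

theorem isOfFinOrder_of_inv_eq_self {G : Type*} [Group G] {g : G} (h : g⁻¹ = g) :
    IsOfFinOrder g :=
  isOfFinOrder_iff_pow_eq_one.mpr ⟨2, two_pos, by rwa [sq, ← inv_eq_iff_mul_eq_one]⟩

theorem inv_ne_self_of_torsionFree {G : Type*} [Group G] {Γ : Subgroup G}
    (htf : ∀ g ∈ Γ, IsOfFinOrder g → g = 1) {S : Set G} (hSΓ : S ⊆ Γ) (hS : (1 : G) ∉ S)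
    {g : G} (hg : g ∈ S) : g⁻¹ ≠ g :=
  fun h => hS (htf g (hSΓ hg) (isOfFinOrder_of_inv_eq_self h) ▸ hg)

theorem Set.even_ncard_of_inv_ne_self {G : Type*} [InvolutiveInv G] {S : Set G}
    (hS : ∀ g ∈ S, g⁻¹ ∈ S) (hne : ∀ g ∈ S, g⁻¹ ≠ g) : Even S.ncard := by
  obtain hfin | hinf := S.finite_or_infinite
  · lift S to Finset G using hfin
    rw [ncard_coe_finset, ← ZMod.natCast_eq_zero_iff_even, Finset.card_eq_sum_ones,
      Nat.cast_sum, Nat.cast_one]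
    exact Finset.sum_involution (fun g _ => g⁻¹) (fun _ _ => by decide) (fun g hg _ => hne g hg)
      hS (fun g _ => inv_inv g)
  · rw [hinf.ncard]
    exact Even.zero

theorem Function.Involutive.bijOn_of_mapsTo {α : Type*} {f : α → α} (hf : Involutive f)
    {s : Set α} (h : MapsTo f s s) : BijOn f s s :=
  InvOn.bijOn ⟨fun x _ => hf x, fun x _ => hf x⟩ h h

theorem Set.BijOn.comp_involutive {α β : Type*} {f : α → β} {s : Set α} {t : Set β}
    (hf : BijOn f s t) {σ : α → α} (hσ : Involutive σ) (hσs : MapsTo σ s s)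
    {ι : β → β} (hι : Involutive ι) (hιt : MapsTo ι t t) : BijOn (ι ∘ f ∘ σ) s t :=
  (hι.bijOn_of_mapsTo hιt).comp (hf.comp (hσ.bijOn_of_mapsTo hσs))

section VHRel

variable {G : Type*} [Group G] {A B : Set G}

/-- `(a, b, b', a') ∈ vhRel A B` is a square with horizontal sides `a, a'` and vertical sides
`b, b'`, with boundary word `a b a'⁻¹ b'⁻¹`; the `mapsTo_vhRel_*` maps are its reflections and its
half-turn. -/
def vhRel (A B : Set G) : Set (G × G × G × G) :=
  {x | x.1 ∈ A ∧ x.2.1 ∈ B ∧ x.2.2.1 ∈ B ∧ x.2.2.2 ∈ A ∧ x.1 * x.2.1 = x.2.2.1 * x.2.2.2}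

theorem mapsTo_vhRel_reflect_left_right (hA : ∀ a ∈ A, a⁻¹ ∈ A) :
    MapsTo (fun x : G × G × G × G => (x.1⁻¹, x.2.2.1, x.2.1, x.2.2.2⁻¹))
      (vhRel A B) (vhRel A B) := by
  rintro ⟨a, b, b', a'⟩ ⟨ha, hb, hb', ha', h⟩
  refine ⟨hA a ha, hb', hb, hA a' ha', ?_⟩
  simp only at h ⊢
  rw [inv_mul_eq_iff_eq_mul, ← mul_assoc, h, mul_inv_cancel_right]

theorem mapsTo_vhRel_reflect_top_bottom (hB : ∀ b ∈ B, b⁻¹ ∈ B) :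
    MapsTo (fun x : G × G × G × G => (x.2.2.2, x.2.1⁻¹, x.2.2.1⁻¹, x.1))
      (vhRel A B) (vhRel A B) := by
  rintro ⟨a, b, b', a'⟩ ⟨ha, hb, hb', ha', h⟩
  refine ⟨ha', hB b hb, hB b' hb', ha, ?_⟩
  simp only at h ⊢
  rw [eq_inv_mul_iff_mul_eq, ← mul_assoc, ← h, mul_inv_cancel_right]

theorem mapsTo_vhRel_rotate (hA : ∀ a ∈ A, a⁻¹ ∈ A) (hB : ∀ b ∈ B, b⁻¹ ∈ B) :
    MapsTo (fun x : G × G × G × G => (x.2.2.2⁻¹, x.2.2.1⁻¹, x.2.1⁻¹, x.1⁻¹))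
      (vhRel A B) (vhRel A B) := by
  rintro ⟨a, b, b', a'⟩ ⟨ha, hb, hb', ha', h⟩
  refine ⟨hA a' ha', hB b' hb', hB b hb, hA a ha, ?_⟩
  simp only at h ⊢
  rw [← mul_inv_rev, ← mul_inv_rev, h]

theorem bijOn_vhRel_corner_ab (hAB : A * B ⊆ B * A)
    (hinj : InjOn (fun p : G × G => p.1 * p.2) (B ×ˢ A)) :
    BijOn (fun x : G × G × G × G => (x.1, x.2.1)) (vhRel A B) (A ×ˢ B) := by
  refine ⟨fun x hx => ⟨hx.1, hx.2.1⟩, ?_, ?_⟩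
  · rintro ⟨a, b, b₁, a₁⟩ ⟨-, -, hb₁, ha₁, h₁⟩ ⟨_, _, b₂, a₂⟩ ⟨-, -, hb₂, ha₂, h₂⟩ he
    obtain ⟨rfl, rfl⟩ := Prod.ext_iff.mp he
    obtain ⟨rfl, rfl⟩ := Prod.ext_iff.mp (hinj ⟨hb₁, ha₁⟩ ⟨hb₂, ha₂⟩ (h₁.symm.trans h₂))
    rfl
  · rintro ⟨a, b⟩ ⟨ha, hb⟩
    obtain ⟨b', hb', a', ha', h⟩ := hAB (mul_mem_mul ha hb)
    exact ⟨(a, b, b', a'), ⟨ha, hb, hb', ha', h.symm⟩, rfl⟩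

theorem bijOn_vhRel_corners (hA : ∀ a ∈ A, a⁻¹ ∈ A) (hB : ∀ b ∈ B, b⁻¹ ∈ B)
    (hAB : A * B ⊆ B * A) (hinj : InjOn (fun p : G × G => p.1 * p.2) (B ×ˢ A)) :
    BijOn (fun x : G × G × G × G => (x.1, x.2.1)) (vhRel A B) (A ×ˢ B) ∧
    BijOn (fun x : G × G × G × G => (x.1, x.2.2.1)) (vhRel A B) (A ×ˢ B) ∧
    BijOn (fun x : G × G × G × G => (x.2.2.2, x.2.1)) (vhRel A B) (A ×ˢ B) ∧
    BijOn (fun x : G × G × G × G => (x.2.2.2, x.2.2.1)) (vhRel A B) (A ×ˢ B) := by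
  have hbij := bijOn_vhRel_corner_ab hAB hinj
  have hinvA : MapsTo (fun p : G × G => (p.1⁻¹, p.2)) (A ×ˢ B) (A ×ˢ B) :=
    fun p hp => ⟨hA _ hp.1, hp.2⟩
  have hinvB : MapsTo (fun p : G × G => (p.1, p.2⁻¹)) (A ×ˢ B) (A ×ˢ B) :=
    fun p hp => ⟨hp.1, hB _ hp.2⟩
  have hinvAB : MapsTo (fun p : G × G => (p.1⁻¹, p.2⁻¹)) (A ×ˢ B) (A ×ˢ B) :=
    fun p hp => ⟨hA _ hp.1, hB _ hp.2⟩
  refine ⟨hbij, ?_, ?_, ?_⟩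
  · refine (hbij.comp_involutive ?_ (mapsTo_vhRel_reflect_left_right hA) ?_ hinvA).congr ?_
    all_goals intro x; simp
  · refine (hbij.comp_involutive ?_ (mapsTo_vhRel_reflect_top_bottom hB) ?_ hinvB).congr ?_
    all_goals intro x; simp
  · refine (hbij.comp_involutive ?_ (mapsTo_vhRel_rotate hA hB) ?_ hinvAB).congr ?_
    all_goals intro x; simp

theorem notMem_vhRel_inv_inv {Γ : Subgroup G} (htf : ∀ g ∈ Γ, IsOfFinOrder g → g = 1)
    (hAΓ : A ⊆ Γ) (hBΓ : B ⊆ Γ) (hA : ∀ a ∈ A, a⁻¹ ∈ A) (hAB : Disjoint A B)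
    {a b : G} (ha : a ∈ A) (hb : b ∈ B) : (a, b, b⁻¹, a⁻¹) ∉ vhRel A B := by
  rintro ⟨-, -, -, -, h⟩
  have hab : a * b = 1 :=
    htf _ (mul_mem (hAΓ ha) (hBΓ hb)) (isOfFinOrder_of_inv_eq_self (by rw [mul_inv_rev, ← h]))
  exact hAB.ne_of_mem (hA a ha) hb (inv_eq_of_mul_eq_one_right hab)

end VHRel

section TreeProduct

variable {V₁ V₂ : Type*} {T₁ : SimpleGraph V₁} {T₂ : SimpleGraph V₂}
  (Γ : Subgroup ((T₁ ≃g T₁) × (T₂ ≃g T₂))) (v₁ : V₁) (v₂ : V₂)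

def ActsFreelyOnProd : Prop :=
  ∀ g ∈ Γ, (∃ u : V₁ × V₂, (g.1 u.1, g.2 u.2) = u) → g = 1

def ActsTransitivelyOnProd : Prop :=
  ∀ u w : V₁ × V₂, ∃ g ∈ Γ, (g.1 u.1, g.2 u.2) = w

def horizontalGens : Set ((T₁ ≃g T₁) × (T₂ ≃g T₂)) :=
  {g | g ∈ Γ ∧ T₁.Adj v₁ (g.1 v₁) ∧ g.2 v₂ = v₂}

def verticalGens : Set ((T₁ ≃g T₁) × (T₂ ≃g T₂)) :=
  {g | g ∈ Γ ∧ g.1 v₁ = v₁ ∧ T₂.Adj v₂ (g.2 v₂)}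

variable {Γ v₁ v₂}

theorem setOf_dist_eq_one_dist_eq_zero (hc : T₂.Connected) :
    {g | g ∈ Γ ∧ T₁.dist v₁ (g.1 v₁) = 1 ∧ T₂.dist v₂ (g.2 v₂) = 0} =
      horizontalGens Γ v₁ v₂ := by
  simp only [SimpleGraph.dist_eq_one_iff_adj, hc.dist_eq_zero_iff, eq_comm (a := v₂)]
  rfl

theorem setOf_dist_eq_zero_dist_eq_one (hc : T₁.Connected) :
    {g | g ∈ Γ ∧ T₁.dist v₁ (g.1 v₁) = 0 ∧ T₂.dist v₂ (g.2 v₂) = 1} =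
      verticalGens Γ v₁ v₂ := by
  simp only [SimpleGraph.dist_eq_one_iff_adj, hc.dist_eq_zero_iff, eq_comm (a := v₁)]
  rfl

theorem horizontalGens_subset : horizontalGens Γ v₁ v₂ ⊆ Γ := fun _ hg => hg.1

theorem verticalGens_subset : verticalGens Γ v₁ v₂ ⊆ Γ := fun _ hg => hg.1

theorem inv_mem_horizontalGens {g} (hg : g ∈ horizontalGens Γ v₁ v₂) :
    g⁻¹ ∈ horizontalGens Γ v₁ v₂ :=
  ⟨inv_mem hg.1, g.1.adj_inv_apply_iff.mpr hg.2.1, g.2.inv_apply_eq_self_iff.mpr hg.2.2⟩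

theorem inv_mem_verticalGens {g} (hg : g ∈ verticalGens Γ v₁ v₂) :
    g⁻¹ ∈ verticalGens Γ v₁ v₂ :=
  ⟨inv_mem hg.1, g.1.inv_apply_eq_self_iff.mpr hg.2.1, g.2.adj_inv_apply_iff.mpr hg.2.2⟩

theorem disjoint_horizontalGens_verticalGens :
    Disjoint (horizontalGens Γ v₁ v₂) (verticalGens Γ v₁ v₂) :=
  disjoint_left.mpr fun _ ha hb => T₁.irrefl (hb.2.1 ▸ ha.2.1)

theorem one_notMem_horizontalGens_union_verticalGens :
    (1 : (T₁ ≃g T₁) × (T₂ ≃g T₂)) ∉ horizontalGens Γ v₁ v₂ ∪ verticalGens Γ v₁ v₂ := by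
  rintro (h | h)
  · exact T₁.irrefl h.2.1
  · exact T₂.irrefl h.2.2

theorem ActsFreelyOnProd.eq_of_apply_eq (hfree : ActsFreelyOnProd Γ)
    {g h : (T₁ ≃g T₁) × (T₂ ≃g T₂)} (hg : g ∈ Γ) (hh : h ∈ Γ)
    (h₁ : g.1 v₁ = h.1 v₁) (h₂ : g.2 v₂ = h.2 v₂) : g = h := by
  refine (inv_mul_eq_one.mp (hfree _ (mul_mem (inv_mem hh) hg) ⟨(v₁, v₂), ?_⟩)).symm
  simp [RelIso.mul_apply, h₁, h₂, RelIso.inv_apply_self]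

theorem ActsTransitivelyOnProd.exists_mem_apply_eq (htrans : ActsTransitivelyOnProd Γ)
    (u₁ : V₁) (u₂ : V₂) : ∃ g ∈ Γ, g.1 v₁ = u₁ ∧ g.2 v₂ = u₂ := by
  simpa only [Prod.ext_iff] using htrans (v₁, v₂) (u₁, u₂)

theorem ncard_horizontalGens (hfree : ActsFreelyOnProd Γ) (htrans : ActsTransitivelyOnProd Γ) :
    (horizontalGens Γ v₁ v₂).ncard = (T₁.neighborSet v₁).ncard := by
  have hinj : InjOn (fun g : (T₁ ≃g T₁) × (T₂ ≃g T₂) => g.1 v₁) (horizontalGens Γ v₁ v₂) :=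
    fun g hg h hh e => hfree.eq_of_apply_eq hg.1 hh.1 e (hg.2.2.trans hh.2.2.symm)
  rw [← hinj.ncard_image]
  congr 1
  ext u
  refine ⟨fun ⟨g, hg, hgu⟩ => hgu ▸ hg.2.1, fun hu => ?_⟩
  obtain ⟨g, hg, hg₁, hg₂⟩ := htrans.exists_mem_apply_eq u v₂
  exact ⟨g, ⟨hg, hg₁ ▸ hu, hg₂⟩, hg₁⟩

theorem ncard_verticalGens (hfree : ActsFreelyOnProd Γ) (htrans : ActsTransitivelyOnProd Γ) :
    (verticalGens Γ v₁ v₂).ncard = (T₂.neighborSet v₂).ncard := by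
  have hinj : InjOn (fun g : (T₁ ≃g T₁) × (T₂ ≃g T₂) => g.2 v₂) (verticalGens Γ v₁ v₂) :=
    fun g hg h hh e => hfree.eq_of_apply_eq hg.1 hh.1 (hg.2.1.trans hh.2.1.symm) e
  rw [← hinj.ncard_image]
  congr 1
  ext u
  refine ⟨fun ⟨g, hg, hgu⟩ => hgu ▸ hg.2.2, fun hu => ?_⟩
  obtain ⟨g, hg, hg₁, hg₂⟩ := htrans.exists_mem_apply_eq v₁ u
  exact ⟨g, ⟨hg, hg₁, hg₂ ▸ hu⟩, hg₂⟩

theorem horizontalGens_mul_verticalGens_subset (htrans : ActsTransitivelyOnProd Γ) :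
    horizontalGens Γ v₁ v₂ * verticalGens Γ v₁ v₂ ⊆
      verticalGens Γ v₁ v₂ * horizontalGens Γ v₁ v₂ := by
  rintro _ ⟨a, ⟨haΓ, ha₁, ha₂⟩, b, ⟨hbΓ, hb₁, hb₂⟩, rfl⟩
  obtain ⟨b', hb'Γ, hb'₁, hb'₂⟩ := htrans.exists_mem_apply_eq v₁ (a.2 (b.2 v₂))
  refine ⟨b', ⟨hb'Γ, hb'₁, ?_⟩, b'⁻¹ * (a * b),
    ⟨mul_mem (inv_mem hb'Γ) (mul_mem haΓ hbΓ), ?_, ?_⟩, mul_inv_cancel_left _ _⟩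
  · rwa [hb'₂, a.2.adj_apply_iff_of_apply_eq_self ha₂]
  · have : b'.1⁻¹ v₁ = v₁ := b'.1.inv_apply_eq_self_iff.mpr hb'₁
    simpa [RelIso.mul_apply, hb₁, (b'.1⁻¹).adj_apply_iff_of_apply_eq_self this] using ha₁
  · simp [RelIso.mul_apply, ← hb'₂, RelIso.inv_apply_self]

theorem injOn_mul_verticalGens_horizontalGens (hfree : ActsFreelyOnProd Γ) :
    InjOn (fun p : ((T₁ ≃g T₁) × (T₂ ≃g T₂)) × ((T₁ ≃g T₁) × (T₂ ≃g T₂)) => p.1 * p.2)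
      (verticalGens Γ v₁ v₂ ×ˢ horizontalGens Γ v₁ v₂) := by
  rintro ⟨b₁, a₁⟩ ⟨hb₁, ha₁⟩ ⟨b₂, a₂⟩ ⟨hb₂, ha₂⟩ (h : b₁ * a₁ = b₂ * a₂)
  have h₂ : b₁.2 (a₁.2 v₂) = b₂.2 (a₂.2 v₂) := congrArg (fun g => g.2 v₂) h
  rw [ha₁.2.2, ha₂.2.2] at h₂
  obtain rfl := hfree.eq_of_apply_eq hb₁.1 hb₂.1 (hb₁.2.1.trans hb₂.2.1.symm) h₂
  rw [mul_left_cancel h]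

theorem exists_mem_horizontalGens_mul_apply_eq (htrans : ActsTransitivelyOnProd Γ)
    (g : (T₁ ≃g T₁) × (T₂ ≃g T₂)) {y : V₁} (hy : T₁.Adj (g.1 v₁) y) :
    ∃ a ∈ horizontalGens Γ v₁ v₂, (g * a).1 v₁ = y ∧ (g * a).2 v₂ = g.2 v₂ := by
  obtain ⟨a, haΓ, ha₁, ha₂⟩ := htrans.exists_mem_apply_eq (g.1⁻¹ y) v₂
  refine ⟨a, ⟨haΓ, ?_, ha₂⟩, ?_, ?_⟩
  · rwa [ha₁, ← g.1.map_adj_iff, RelIso.apply_inv_self]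
  · simp [RelIso.mul_apply, ha₁, RelIso.apply_inv_self]
  · simp [RelIso.mul_apply, ha₂]

theorem exists_mem_verticalGens_mul_apply_eq (htrans : ActsTransitivelyOnProd Γ)
    (g : (T₁ ≃g T₁) × (T₂ ≃g T₂)) {y : V₂} (hy : T₂.Adj (g.2 v₂) y) :
    ∃ b ∈ verticalGens Γ v₁ v₂, (g * b).1 v₁ = g.1 v₁ ∧ (g * b).2 v₂ = y := by
  obtain ⟨b, hbΓ, hb₁, hb₂⟩ := htrans.exists_mem_apply_eq v₁ (g.2⁻¹ y)
  refine ⟨b, ⟨hbΓ, hb₁, ?_⟩, ?_, ?_⟩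
  · rwa [hb₂, ← g.2.map_adj_iff, RelIso.apply_inv_self]
  · simp [RelIso.mul_apply, hb₁]
  · simp [RelIso.mul_apply, hb₂, RelIso.apply_inv_self]

theorem closure_horizontalGens_union_verticalGens (hc₁ : T₁.Preconnected)
    (hc₂ : T₂.Preconnected) (hfree : ActsFreelyOnProd Γ) (htrans : ActsTransitivelyOnProd Γ) :
    Subgroup.closure (horizontalGens Γ v₁ v₂ ∪ verticalGens Γ v₁ v₂) = Γ := by
  set H := Subgroup.closure (horizontalGens Γ v₁ v₂ ∪ verticalGens Γ v₁ v₂)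
  have hHΓ : H ≤ Γ :=
    (Subgroup.closure_le Γ).mpr (union_subset horizontalGens_subset verticalGens_subset)
  have horbit (u₁ : V₁) (u₂ : V₂) : ∃ h ∈ H, h.1 v₁ = u₁ ∧ h.2 v₂ = u₂ := by
    refine hc₂.forall_of_forall_adj (v := v₂)
      (P := fun u₂ => ∃ h ∈ H, h.1 v₁ = u₁ ∧ h.2 v₂ = u₂) ?_ ?_ u₂
    · refine hc₁.forall_of_forall_adj (P := fun u₁ => ∃ h ∈ H, h.1 v₁ = u₁ ∧ h.2 v₂ = v₂)
        ⟨1, one_mem H, rfl, rfl⟩ ?_ u₁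
      rintro x y hxy ⟨h, hH, rfl, hh₂⟩
      obtain ⟨a, ha, ha₁, ha₂⟩ := exists_mem_horizontalGens_mul_apply_eq htrans h hxy
      exact ⟨h * a, mul_mem hH (Subgroup.subset_closure (Or.inl ha)), ha₁, ha₂.trans hh₂⟩
    · rintro x y hxy ⟨h, hH, hh₁, rfl⟩
      obtain ⟨b, hb, hb₁, hb₂⟩ := exists_mem_verticalGens_mul_apply_eq htrans h hxy
      exact ⟨h * b, mul_mem hH (Subgroup.subset_closure (Or.inr hb)), hb₁.trans hh₁, hb₂⟩
  refine le_antisymm hHΓ fun g hg => ?_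
  obtain ⟨h, hH, hh₁, hh₂⟩ := horbit (g.1 v₁) (g.2 v₂)
  rwa [hfree.eq_of_apply_eq hg (hHΓ hH) hh₁.symm hh₂.symm]

end TreeProduct

/-- A torsion-free group acting freely and transitively on the
vertices of a product of an `m`-regular tree and an `n`-regular tree satisfies
the defining properties of a BM group (VH-datum). -/
theorem torsionfree_simply_transitive_is_BM {V₁ V₂ : Type*}
    (T₁ : SimpleGraph V₁) (T₂ : SimpleGraph V₂)
    (h₁ : T₁.IsTree) (h₂ : T₂.IsTree) (m n : ℕ)
    (hdeg₁ : ∀ v : V₁, (T₁.neighborSet v).ncard = m)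
    (hdeg₂ : ∀ v : V₂, (T₂.neighborSet v).ncard = n)
    (Γ : Subgroup ((T₁ ≃g T₁) × (T₂ ≃g T₂)))
    (htorsionfree : ∀ g ∈ Γ, IsOfFinOrder g → g = 1)
    (hfree : ∀ g ∈ Γ, (∃ u : V₁ × V₂, (g.1 u.1, g.2 u.2) = u) → g = 1)
    (htrans : ∀ u w : V₁ × V₂, ∃ g ∈ Γ, (g.1 u.1, g.2 u.2) = w)
    (v₁ : V₁) (v₂ : V₂)
    (A B : Set ((T₁ ≃g T₁) × (T₂ ≃g T₂)))
    (hA : A = {g | g ∈ Γ ∧ T₁.dist v₁ (g.1 v₁) = 1 ∧ T₂.dist v₂ (g.2 v₂) = 0})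
    (hB : B = {g | g ∈ Γ ∧ T₁.dist v₁ (g.1 v₁) = 0 ∧ T₂.dist v₂ (g.2 v₂) = 1})
    (R : Set (((T₁ ≃g T₁) × (T₂ ≃g T₂)) × ((T₁ ≃g T₁) × (T₂ ≃g T₂)) ×
      ((T₁ ≃g T₁) × (T₂ ≃g T₂)) × ((T₁ ≃g T₁) × (T₂ ≃g T₂))))
    (hR : R = {x | x.1 ∈ A ∧ x.2.1 ∈ B ∧ x.2.2.1 ∈ B ∧ x.2.2.2 ∈ A ∧
      x.1 * x.2.1 = x.2.2.1 * x.2.2.2}) :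
    -- (1)
    A.ncard = m ∧ B.ncard = n ∧
    -- (2)
    (∀ g ∈ A, g⁻¹ ∈ A) ∧ (∀ g ∈ B, g⁻¹ ∈ B) ∧
    (∀ g ∈ A ∪ B, g⁻¹ ≠ g) ∧ Even m ∧ Even n ∧
    -- (3)
    (∀ a b b' a', (a, b, b', a') ∈ R →
      (a⁻¹, b', b, a'⁻¹) ∈ R ∧ (a'⁻¹, b'⁻¹, b⁻¹, a⁻¹) ∈ R ∧
      (a', b⁻¹, b'⁻¹, a) ∈ R) ∧
    -- (4)
    (∀ a ∈ A, ∀ b ∈ B, (a, b, b⁻¹, a⁻¹) ∉ R) ∧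
    -- (5)
    Set.BijOn (fun x : ((T₁ ≃g T₁) × (T₂ ≃g T₂)) × ((T₁ ≃g T₁) × (T₂ ≃g T₂)) ×
      ((T₁ ≃g T₁) × (T₂ ≃g T₂)) × ((T₁ ≃g T₁) × (T₂ ≃g T₂)) =>
      (x.1, x.2.1)) R (A ×ˢ B) ∧
    Set.BijOn (fun x : ((T₁ ≃g T₁) × (T₂ ≃g T₂)) × ((T₁ ≃g T₁) × (T₂ ≃g T₂)) ×
      ((T₁ ≃g T₁) × (T₂ ≃g T₂)) × ((T₁ ≃g T₁) × (T₂ ≃g T₂)) =>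
      (x.1, x.2.2.1)) R (A ×ˢ B) ∧
    Set.BijOn (fun x : ((T₁ ≃g T₁) × (T₂ ≃g T₂)) × ((T₁ ≃g T₁) × (T₂ ≃g T₂)) ×
      ((T₁ ≃g T₁) × (T₂ ≃g T₂)) × ((T₁ ≃g T₁) × (T₂ ≃g T₂)) =>
      (x.2.2.2, x.2.1)) R (A ×ˢ B) ∧
    Set.BijOn (fun x : ((T₁ ≃g T₁) × (T₂ ≃g T₂)) × ((T₁ ≃g T₁) × (T₂ ≃g T₂)) ×
      ((T₁ ≃g T₁) × (T₂ ≃g T₂)) × ((T₁ ≃g T₁) × (T₂ ≃g T₂)) =>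
      (x.2.2.2, x.2.2.1)) R (A ×ˢ B) ∧
    -- (6)
    Subgroup.closure (A ∪ B) = Γ := by
  have hc₁ := h₁.connected
  have hc₂ := h₂.connected
  obtain rfl : R = vhRel A B := hR
  rw [setOf_dist_eq_one_dist_eq_zero hc₂] at hA
  rw [setOf_dist_eq_zero_dist_eq_one hc₁] at hB
  subst hA hB
  set A := horizontalGens Γ v₁ v₂
  set B := verticalGens Γ v₁ v₂
  have hAinv : ∀ a ∈ A, a⁻¹ ∈ A := fun _ => inv_mem_horizontalGens
  have hBinv : ∀ b ∈ B, b⁻¹ ∈ B := fun _ => inv_mem_verticalGens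
  have hinv_ne : ∀ g ∈ A ∪ B, g⁻¹ ≠ g :=
    fun _ => inv_ne_self_of_torsionFree htorsionfree
      (union_subset horizontalGens_subset verticalGens_subset)
      one_notMem_horizontalGens_union_verticalGens
  have hAcard : A.ncard = m :=
    (ncard_horizontalGens hfree htrans).trans (hdeg₁ v₁)
  have hBcard : B.ncard = n :=
    (ncard_verticalGens hfree htrans).trans (hdeg₂ v₂)
  obtain ⟨hbij₁, hbij₂, hbij₃, hbij₄⟩ := bijOn_vhRel_corners hAinv hBinv
    (horizontalGens_mul_verticalGens_subset htrans) (injOn_mul_verticalGens_horizontalGens hfree)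
  refine ⟨hAcard, hBcard, hAinv, hBinv, hinv_ne,
    hAcard ▸ even_ncard_of_inv_ne_self hAinv fun g hg => hinv_ne g (Or.inl hg),
    hBcard ▸ even_ncard_of_inv_ne_self hBinv fun g hg => hinv_ne g (Or.inr hg),
    fun a b b' a' hx => ⟨mapsTo_vhRel_reflect_left_right hAinv hx,
      mapsTo_vhRel_rotate hAinv hBinv hx, mapsTo_vhRel_reflect_top_bottom hBinv hx⟩,
    fun a ha b hb => notMem_vhRel_inv_inv htorsionfree horizontalGens_subset
      verticalGens_subset hAinv disjoint_horizontalGens_verticalGens ha hb,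
    hbij₁, hbij₂, hbij₃, hbij₄,
    closure_horizontalGens_union_verticalGens hc₁.preconnected hc₂.preconnected hfree htrans⟩
end

section
/- Let (A, B, R) be a VH-datum with parameters (m,n) and let M₁, M₂ be its transition matrices. For r₀ ∈ R let S₊(r₀) = { r ∈ R : there exists r₁ ∈ R with M₁(r₁,r₀) = 1 and M₂(r,r₁) = 1 }, and for r_t ∈ R let S₋(r_t) = { r ∈ R : there exists r₁ ∈ R with M₁(r₁,r) = 1 and M₂(r_t,r₁) = 1 }. Then |S₊(r₀)| = (m−1)(n−1) for every r₀ ∈ R, and |S₋(r_t)| = (m−1)(n−1) for every r_t ∈ R. -/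
/-- A VH-datum with parameters `(m,n)`: finite sets `A`, `B` of even
cardinalities `m, n ≥ 4` with fixed-point-free involutions, together with a set
`R ⊆ A × B × B × A` satisfying the Burger–Mozes conditions (i)–(iii). -/
structure VHDatum (m n : ℕ) (A B : Type) [Fintype A] [Fintype B]
    [DecidableEq A] [DecidableEq B] where
  cardA : Fintype.card A = m
  cardB : Fintype.card B = n
  four_le_m : 4 ≤ m
  four_le_n : 4 ≤ n
  even_m : Even m
  even_n : Even n
  invA : A → A
  invB : B → B
  invA_invA : ∀ a, invA (invA a) = a
  invB_invB : ∀ b, invB (invB b) = b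
  invA_ne : ∀ a, invA a ≠ a
  invB_ne : ∀ b, invB b ≠ b
  R : Finset (A × B × B × A)
  cond_i : ∀ a b b' a', (a, b, b', a') ∈ R →
    (invA a, b', b, invA a') ∈ R ∧ (invA a', invB b', invB b, invA a) ∈ R ∧
    (a', invB b, invB b', a) ∈ R
  cond_ii : ∀ a b, (a, b, invB b, invA a) ∉ R
  cond_iii_ab : Set.BijOn (fun x : A × B × B × A => (x.1, x.2.1)) ↑R Set.univ
  cond_iii_ab' : Set.BijOn (fun x : A × B × B × A => (x.1, x.2.2.1)) ↑R Set.univ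
  cond_iii_a'b : Set.BijOn (fun x : A × B × B × A => (x.2.2.2, x.2.1)) ↑R Set.univ
  cond_iii_a'b' : Set.BijOn (fun x : A × B × B × A => (x.2.2.2, x.2.2.1)) ↑R Set.univ

variable {m n : ℕ} {A B : Type} [Fintype A] [Fintype B] [DecidableEq A] [DecidableEq B]

/-- The horizontal transition matrix `M₁`: for `r = (a,b,b′,a′)` and
`s = (c,d,d′,c′)` in `R`, `M₁(s,r) = 1` iff `d′ = b` and `c ≠ a⁻¹`. -/
def VHDatum.M1 (D : VHDatum m n A B) : Matrix D.R D.R ℤ := fun s r =>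
  if (s : A × B × B × A).2.2.1 = (r : A × B × B × A).2.1 ∧
      (s : A × B × B × A).1 ≠ D.invA (r : A × B × B × A).1 then 1 else 0

/-- The vertical transition matrix `M₂`: for `r = (a,b,b′,a′)` and
`s = (c,d,d′,c′)` in `R`, `M₂(s,r) = 1` iff `c = a′` and `d ≠ b⁻¹`. -/
def VHDatum.M2 (D : VHDatum m n A B) : Matrix D.R D.R ℤ := fun s r =>
  if (s : A × B × B × A).1 = (r : A × B × B × A).2.2.2 ∧
      (s : A × B × B × A).2.1 ≠ D.invB (r : A × B × B × A).2.1 then 1 else 0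

namespace VHDatum

variable (D : VHDatum m n A B)

/-- Uniqueness from the injectivity of the `(a,b)` projection. -/
lemma injR12 {x y : A × B × B × A} (hx : x ∈ D.R) (hy : y ∈ D.R)
    (h1 : x.1 = y.1) (h2 : x.2.1 = y.2.1) : x = y :=
  D.cond_iii_ab.2.1 (Finset.mem_coe.mpr hx) (Finset.mem_coe.mpr hy)
    (by simp [h1, h2])

/-- Uniqueness from the injectivity of the `(a,b')` projection. -/
lemma injR13 {x y : A × B × B × A} (hx : x ∈ D.R) (hy : y ∈ D.R)
    (h1 : x.1 = y.1) (h2 : x.2.2.1 = y.2.2.1) : x = y :=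
  D.cond_iii_ab'.2.1 (Finset.mem_coe.mpr hx) (Finset.mem_coe.mpr hy)
    (by simp [h1, h2])

/-- Uniqueness from the injectivity of the `(a',b)` projection. -/
lemma injR42 {x y : A × B × B × A} (hx : x ∈ D.R) (hy : y ∈ D.R)
    (h1 : x.2.2.2 = y.2.2.2) (h2 : x.2.1 = y.2.1) : x = y :=
  D.cond_iii_a'b.2.1 (Finset.mem_coe.mpr hx) (Finset.mem_coe.mpr hy)
    (by simp [h1, h2])

/-- Uniqueness from the injectivity of the `(a',b')` projection. -/
lemma injR43 {x y : A × B × B × A} (hx : x ∈ D.R) (hy : y ∈ D.R)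
    (h1 : x.2.2.2 = y.2.2.2) (h2 : x.2.2.1 = y.2.2.1) : x = y :=
  D.cond_iii_a'b'.2.1 (Finset.mem_coe.mpr hx) (Finset.mem_coe.mpr hy)
    (by simp [h1, h2])

lemma exists12 (a : A) (b : B) : ∃ x, x ∈ D.R ∧ x.1 = a ∧ x.2.1 = b := by
  obtain ⟨x, hx, hx2⟩ := D.cond_iii_ab.2.2 (Set.mem_univ (a, b))
  exact ⟨x, Finset.mem_coe.mp hx,
    (Prod.mk.injEq _ _ _ _).mp hx2 |>.1, (Prod.mk.injEq _ _ _ _).mp hx2 |>.2⟩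

lemma exists13 (a : A) (b' : B) : ∃ x, x ∈ D.R ∧ x.1 = a ∧ x.2.2.1 = b' := by
  obtain ⟨x, hx, hx2⟩ := D.cond_iii_ab'.2.2 (Set.mem_univ (a, b'))
  exact ⟨x, Finset.mem_coe.mp hx,
    (Prod.mk.injEq _ _ _ _).mp hx2 |>.1, (Prod.mk.injEq _ _ _ _).mp hx2 |>.2⟩

lemma exists42 (a' : A) (b : B) : ∃ x, x ∈ D.R ∧ x.2.2.2 = a' ∧ x.2.1 = b := by
  obtain ⟨x, hx, hx2⟩ := D.cond_iii_a'b.2.2 (Set.mem_univ (a', b))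
  exact ⟨x, Finset.mem_coe.mp hx,
    (Prod.mk.injEq _ _ _ _).mp hx2 |>.1, (Prod.mk.injEq _ _ _ _).mp hx2 |>.2⟩

lemma exists43 (a' : A) (b' : B) : ∃ x, x ∈ D.R ∧ x.2.2.2 = a' ∧ x.2.2.1 = b' := by
  obtain ⟨x, hx, hx2⟩ := D.cond_iii_a'b'.2.2 (Set.mem_univ (a', b'))
  exact ⟨x, Finset.mem_coe.mp hx,
    (Prod.mk.injEq _ _ _ _).mp hx2 |>.1, (Prod.mk.injEq _ _ _ _).mp hx2 |>.2⟩

/-- The unique element of `R` with prescribed first and second coordinates. -/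
noncomputable def p12 (a : A) (b : B) : A × B × B × A := (D.exists12 a b).choose
lemma p12_mem (a : A) (b : B) : D.p12 a b ∈ D.R := (D.exists12 a b).choose_spec.1
lemma p12_1 (a : A) (b : B) : (D.p12 a b).1 = a := (D.exists12 a b).choose_spec.2.1
lemma p12_2 (a : A) (b : B) : (D.p12 a b).2.1 = b := (D.exists12 a b).choose_spec.2.2

/-- The unique element of `R` with prescribed first and third coordinates. -/
noncomputable def p13 (a : A) (b' : B) : A × B × B × A := (D.exists13 a b').choose
lemma p13_mem (a : A) (b' : B) : D.p13 a b' ∈ D.R := (D.exists13 a b').choose_spec.1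
lemma p13_1 (a : A) (b' : B) : (D.p13 a b').1 = a := (D.exists13 a b').choose_spec.2.1
lemma p13_3 (a : A) (b' : B) : (D.p13 a b').2.2.1 = b' := (D.exists13 a b').choose_spec.2.2

/-- The unique element of `R` with prescribed fourth and second coordinates. -/
noncomputable def p42 (a' : A) (b : B) : A × B × B × A := (D.exists42 a' b).choose
lemma p42_mem (a' : A) (b : B) : D.p42 a' b ∈ D.R := (D.exists42 a' b).choose_spec.1
lemma p42_4 (a' : A) (b : B) : (D.p42 a' b).2.2.2 = a' := (D.exists42 a' b).choose_spec.2.1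
lemma p42_2 (a' : A) (b : B) : (D.p42 a' b).2.1 = b := (D.exists42 a' b).choose_spec.2.2

/-- The unique element of `R` with prescribed fourth and third coordinates. -/
noncomputable def p43 (a' : A) (b' : B) : A × B × B × A := (D.exists43 a' b').choose
lemma p43_mem (a' : A) (b' : B) : D.p43 a' b' ∈ D.R := (D.exists43 a' b').choose_spec.1
lemma p43_4 (a' : A) (b' : B) : (D.p43 a' b').2.2.2 = a' := (D.exists43 a' b').choose_spec.2.1
lemma p43_3 (a' : A) (b' : B) : (D.p43 a' b').2.2.1 = b' := (D.exists43 a' b').choose_spec.2.2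

lemma M1_eq_one_iff (s r : D.R) : D.M1 s r = 1 ↔
    ((s : A × B × B × A).2.2.1 = (r : A × B × B × A).2.1 ∧
      (s : A × B × B × A).1 ≠ D.invA (r : A × B × B × A).1) := by
  unfold VHDatum.M1
  split <;> simp_all

lemma M2_eq_one_iff (s r : D.R) : D.M2 s r = 1 ↔
    ((s : A × B × B × A).1 = (r : A × B × B × A).2.2.2 ∧
      (s : A × B × B × A).2.1 ≠ D.invB (r : A × B × B × A).2.1) := by
  unfold VHDatum.M2
  split <;> simp_all

end VHDatum

/-- Counting pairs `(a,b)` with `a ≠ x` and `b ≠ g a`. -/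
lemma count_aux {A B : Type} [Fintype A] [Fintype B] [DecidableEq A] [DecidableEq B]
    (x : A) (g : A → B) :
    (Finset.univ.filter fun p : A × B => p.1 ≠ x ∧ p.2 ≠ g p.1).card
      = (Fintype.card A - 1) * (Fintype.card B - 1) := by
  have hset : (Finset.univ.filter fun p : A × B => p.1 ≠ x ∧ p.2 ≠ g p.1)
      = (Finset.univ.erase x).biUnion
          (fun a => (Finset.univ.erase (g a)).image fun b => (a, b)) := by
    ext ⟨a, b⟩
    simp only [Finset.mem_filter, Finset.mem_univ, true_and, Finset.mem_biUnion,
      Finset.mem_image, Finset.mem_erase, and_true, Prod.mk.injEq]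
    constructor
    · rintro ⟨h1, h2⟩; exact ⟨a, h1, b, h2, rfl, rfl⟩
    · rintro ⟨a', h1, b', h2, rfl, rfl⟩; exact ⟨h1, h2⟩
  rw [hset, Finset.card_biUnion]
  · have : ∀ a ∈ Finset.univ.erase x,
        ((Finset.univ.erase (g a)).image fun b => (a, b)).card
          = Fintype.card B - 1 := by
      intro a _
      rw [Finset.card_image_of_injective _ (fun b b' h => by
        simpa using (Prod.mk.injEq _ _ _ _).mp h |>.2)]
      simp [Finset.card_erase_of_mem]
    rw [Finset.sum_congr rfl this, Finset.sum_const,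
      Finset.card_erase_of_mem (Finset.mem_univ x)]
    simp [mul_comm]
  · intro a _ a' _ hne
    simp only [Finset.disjoint_left, Finset.mem_image]
    rintro p ⟨b, _, rfl⟩ ⟨b', _, h⟩
    exact hne ((Prod.mk.injEq _ _ _ _).mp h |>.1).symm


/-- the sets `S₊(r₀)` and `S₋(r_t)` each have exactly
`(m−1)(n−1)` elements. -/
theorem VHDatum.Splus_Sminus_card (D : VHDatum m n A B) :
    (∀ r₀ : D.R,
      {r : D.R | ∃ r₁ : D.R, D.M1 r₁ r₀ = 1 ∧ D.M2 r r₁ = 1}.ncard =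
        (m - 1) * (n - 1)) ∧
    (∀ rt : D.R,
      {r : D.R | ∃ r₁ : D.R, D.M1 r₁ r = 1 ∧ D.M2 rt r₁ = 1}.ncard =
        (m - 1) * (n - 1)) := by
  classical
  constructor
  · intro r₀
    set a₀ := (r₀ : A × B × B × A).1 with ha₀
    set b₀ := (r₀ : A × B × B × A).2.1 with hb₀
    set x₀ := (D.p13 (D.invA a₀) b₀).2.2.2 with hx₀
    set g : A → B := fun a => D.invB ((D.p43 a b₀).2.1) with hg
    have char : ∀ r : D.R, (∃ r₁ : D.R, D.M1 r₁ r₀ = 1 ∧ D.M2 r r₁ = 1) ↔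
        ((r : A × B × B × A).1 ≠ x₀ ∧
          (r : A × B × B × A).2.1 ≠ g (r : A × B × B × A).1) := by
      intro r
      constructor
      · rintro ⟨r₁, h1, h2⟩
        rw [D.M1_eq_one_iff] at h1
        rw [D.M2_eq_one_iff] at h2
        have hu : (r₁ : A × B × B × A) = D.p43 (r : A × B × B × A).1 b₀ :=
          D.injR43 r₁.2 (D.p43_mem _ _) (by rw [D.p43_4, ← h2.1])
            (by rw [D.p43_3, h1.1])
        constructor
        · intro hcon
          apply h1.2
          have he : D.p43 (r : A × B × B × A).1 b₀ = D.p13 (D.invA a₀) b₀ :=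
            D.injR43 (D.p43_mem _ _) (D.p13_mem _ _)
              (by rw [D.p43_4, hcon, hx₀]) (by rw [D.p43_3, D.p13_3])
          rw [hu, he, D.p13_1]
        · rw [hu] at h2
          exact h2.2
      · rintro ⟨hA, hB⟩
        refine ⟨⟨D.p43 (r : A × B × B × A).1 b₀, D.p43_mem _ _⟩, ?_, ?_⟩
        · rw [D.M1_eq_one_iff]
          refine ⟨D.p43_3 _ _, ?_⟩
          intro hcon
          apply hA
          have he : D.p43 (r : A × B × B × A).1 b₀ = D.p13 (D.invA a₀) b₀ :=
            D.injR13 (D.p43_mem _ _) (D.p13_mem _ _)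
              (by rw [D.p13_1, hcon]) (by rw [D.p43_3, D.p13_3])
          rw [hx₀, ← he, D.p43_4]
        · rw [D.M2_eq_one_iff]
          exact ⟨(D.p43_4 _ _).symm, hB⟩
    have hset : {r : D.R | ∃ r₁ : D.R, D.M1 r₁ r₀ = 1 ∧ D.M2 r r₁ = 1}
        = ↑(Finset.univ.filter fun r : D.R =>
            (r : A × B × B × A).1 ≠ x₀ ∧
              (r : A × B × B × A).2.1 ≠ g (r : A × B × B × A).1) := by
      ext r
      simp only [Set.mem_setOf_eq, Finset.coe_filter, Finset.mem_univ, true_and]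
      exact char r
    have hcount : (Finset.univ.filter fun p : A × B => p.1 ≠ x₀ ∧ p.2 ≠ g p.1).card
        = (m - 1) * (n - 1) := by rw [count_aux, D.cardA, D.cardB]
    rw [hset, Set.ncard_coe_finset, ← hcount]
    refine Finset.card_bij
      (fun r _ => ((r : A × B × B × A).1, (r : A × B × B × A).2.1)) ?_ ?_ ?_
    · intro r hr
      simp only [Finset.mem_filter, Finset.mem_univ, true_and] at hr ⊢
      exact hr
    · intro r₁ h₁ r₂ h₂ h
      obtain ⟨ha, hb⟩ := (Prod.mk.injEq _ _ _ _).mp h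
      exact Subtype.ext (D.injR12 r₁.2 r₂.2 ha hb)
    · rintro ⟨a, b⟩ hp
      simp only [Finset.mem_filter, Finset.mem_univ, true_and] at hp
      refine ⟨⟨D.p12 a b, D.p12_mem a b⟩, ?_, ?_⟩
      · simp only [Finset.mem_filter, Finset.mem_univ, true_and, D.p12_1, D.p12_2]
        exact hp
      · simp [D.p12_1, D.p12_2]
  · intro rt
    set ct := (rt : A × B × B × A).1 with hct
    set dt := (rt : A × B × B × A).2.1 with hdt
    set y₀ := (D.p42 ct (D.invB dt)).2.2.1 with hy₀
    set h : B → A := fun b' => D.invA ((D.p43 ct b').1) with hh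
    have char : ∀ r : D.R, (∃ r₁ : D.R, D.M1 r₁ r = 1 ∧ D.M2 rt r₁ = 1) ↔
        ((r : A × B × B × A).2.1 ≠ y₀ ∧
          (r : A × B × B × A).1 ≠ h (r : A × B × B × A).2.1) := by
      intro r
      constructor
      · rintro ⟨r₁, h1, h2⟩
        rw [D.M1_eq_one_iff] at h1
        rw [D.M2_eq_one_iff] at h2
        have hu : (r₁ : A × B × B × A) = D.p43 ct (r : A × B × B × A).2.1 :=
          D.injR43 r₁.2 (D.p43_mem _ _) (by rw [D.p43_4, ← h2.1])
            (by rw [D.p43_3, h1.1])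
        constructor
        · intro hcon
          apply h2.2
          have he : D.p43 ct (r : A × B × B × A).2.1 = D.p42 ct (D.invB dt) :=
            D.injR43 (D.p43_mem _ _) (D.p42_mem _ _)
              (by rw [D.p43_4, D.p42_4]) (by rw [D.p43_3, hcon, hy₀])
          rw [hu, he, D.p42_2, D.invB_invB]
        · intro hcon
          have hcon' : (r : A × B × B × A).1
              = D.invA ((D.p43 ct (r : A × B × B × A).2.1).1) := hcon
          apply h1.2
          rw [hu, hcon', D.invA_invA]
      · rintro ⟨hB, hA⟩
        refine ⟨⟨D.p43 ct (r : A × B × B × A).2.1, D.p43_mem _ _⟩, ?_, ?_⟩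
        · rw [D.M1_eq_one_iff]
          refine ⟨D.p43_3 _ _, ?_⟩
          intro hcon
          have hcon' : (D.p43 ct (r : A × B × B × A).2.1).1
              = D.invA (r : A × B × B × A).1 := hcon
          apply hA
          rw [show h (r : A × B × B × A).2.1
            = D.invA ((D.p43 ct (r : A × B × B × A).2.1).1) from rfl, hcon',
            D.invA_invA]
        · rw [D.M2_eq_one_iff]
          refine ⟨(D.p43_4 _ _).symm, ?_⟩
          intro hcon
          have hcon' : dt = D.invB ((D.p43 ct (r : A × B × B × A).2.1).2.1) := hcon
          apply hB
          have he : D.p43 ct (r : A × B × B × A).2.1 = D.p42 ct (D.invB dt) :=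
            D.injR42 (D.p43_mem _ _) (D.p42_mem _ _)
              (by rw [D.p43_4, D.p42_4]) (by rw [D.p42_2, hcon', D.invB_invB])
          rw [hy₀, ← he, D.p43_3]
    have hset : {r : D.R | ∃ r₁ : D.R, D.M1 r₁ r = 1 ∧ D.M2 rt r₁ = 1}
        = ↑(Finset.univ.filter fun r : D.R =>
            (r : A × B × B × A).2.1 ≠ y₀ ∧
              (r : A × B × B × A).1 ≠ h (r : A × B × B × A).2.1) := by
      ext r
      simp only [Set.mem_setOf_eq, Finset.coe_filter, Finset.mem_univ, true_and]
      exact char r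
    have hcount : (Finset.univ.filter fun p : B × A => p.1 ≠ y₀ ∧ p.2 ≠ h p.1).card
        = (m - 1) * (n - 1) := by
      rw [count_aux, D.cardA, D.cardB, Nat.mul_comm]
    rw [hset, Set.ncard_coe_finset, ← hcount]
    refine Finset.card_bij
      (fun r _ => ((r : A × B × B × A).2.1, (r : A × B × B × A).1)) ?_ ?_ ?_
    · intro r hr
      simp only [Finset.mem_filter, Finset.mem_univ, true_and] at hr ⊢
      exact hr
    · intro r₁ h₁ r₂ h₂ hE
      obtain ⟨hb, ha⟩ := (Prod.mk.injEq _ _ _ _).mp hE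
      exact Subtype.ext (D.injR12 r₁.2 r₂.2 ha hb)
    · rintro ⟨b, a⟩ hp
      simp only [Finset.mem_filter, Finset.mem_univ, true_and] at hp
      refine ⟨⟨D.p12 a b, D.p12_mem a b⟩, ?_, ?_⟩
      · simp only [Finset.mem_filter, Finset.mem_univ, true_and, D.p12_1, D.p12_2]
        exact hp
      · simp [D.p12_1, D.p12_2]
end

section
/- Let (A, B, R) be a VH-datum with parameters (m,n) and let M₁, M₂ be its transition matrices. For m = (m₁,m₂) ∈ ℕ², a word of shape m is a function w from the box [0,m₁]×[0,m₂] ⊆ ℤ² to R such that M₁(w(l+e₁), w(l)) = 1 whenever l and l+e₁ both lie in the box, and M₂(w(l+e₂), w(l)) = 1 whenever l and l+e₂ both lie in the box (e₁ = (1,0), e₂ = (0,1)). Then for every nonzero p ∈ ℤ² there exist m ∈ ℕ², a word w of shape m, and l ∈ ℤ² such that both l and l+p lie in the box [0,m₁]×[0,m₂] and w(l) ≠ w(l+p). -/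
variable {m n : ℕ} {A B : Type} [Fintype A] [Fintype B] [DecidableEq A] [DecidableEq B]

namespace VHDatum

variable (D : VHDatum m n A B)

/-- bottom edge -/
def bot (r : D.R) : A := (r : A × B × B × A).1
/-- right edge -/
def rgt (r : D.R) : B := (r : A × B × B × A).2.1
/-- left edge -/
def lft (r : D.R) : B := (r : A × B × B × A).2.2.1
/-- top edge -/
def top (r : D.R) : A := (r : A × B × B × A).2.2.2

lemma val_eq (r : D.R) : (r : A × B × B × A) = (D.bot r, D.rgt r, D.lft r, D.top r) := rfl

lemma mem_R (r : D.R) : (D.bot r, D.rgt r, D.lft r, D.top r) ∈ D.R := by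
  rw [← D.val_eq r]; exact r.2

lemma inj_bl {r s : D.R} (h1 : D.bot r = D.bot s) (h2 : D.lft r = D.lft s) : r = s := by
  apply Subtype.ext
  exact D.cond_iii_ab'.injOn (Finset.mem_coe.mpr r.2) (Finset.mem_coe.mpr s.2)
    (by simp only [Prod.mk.injEq]; exact ⟨h1, h2⟩)

lemma inj_br {r s : D.R} (h1 : D.bot r = D.bot s) (h2 : D.rgt r = D.rgt s) : r = s := by
  apply Subtype.ext
  exact D.cond_iii_ab.injOn (Finset.mem_coe.mpr r.2) (Finset.mem_coe.mpr s.2)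
    (by simp only [Prod.mk.injEq]; exact ⟨h1, h2⟩)

lemma inj_tl {r s : D.R} (h1 : D.top r = D.top s) (h2 : D.lft r = D.lft s) : r = s := by
  apply Subtype.ext
  exact D.cond_iii_a'b'.injOn (Finset.mem_coe.mpr r.2) (Finset.mem_coe.mpr s.2)
    (by simp only [Prod.mk.injEq]; exact ⟨h1, h2⟩)

lemma exists_bl (a : A) (b' : B) : ∃ r : D.R, D.bot r = a ∧ D.lft r = b' := by
  obtain ⟨x, hx, hfx⟩ := D.cond_iii_ab'.surjOn (Set.mem_univ (a, b'))
  refine ⟨⟨x, Finset.mem_coe.mp hx⟩, ?_, ?_⟩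
  · exact congrArg Prod.fst hfx
  · exact congrArg (fun q : A × B => q.2) hfx

lemma exists_br (a : A) (b : B) : ∃ r : D.R, D.bot r = a ∧ D.rgt r = b := by
  obtain ⟨x, hx, hfx⟩ := D.cond_iii_ab.surjOn (Set.mem_univ (a, b))
  refine ⟨⟨x, Finset.mem_coe.mp hx⟩, ?_, ?_⟩
  · exact congrArg Prod.fst hfx
  · exact congrArg (fun q : A × B => q.2) hfx

/-- the unique square with given bottom and left edges -/
noncomputable def sqBL (a : A) (b' : B) : D.R := (D.exists_bl a b').choose

lemma sqBL_bot (a : A) (b' : B) : D.bot (D.sqBL a b') = a := (D.exists_bl a b').choose_spec.1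
lemma sqBL_lft (a : A) (b' : B) : D.lft (D.sqBL a b') = b' := (D.exists_bl a b').choose_spec.2

/-- the unique square with given bottom and right edges -/
noncomputable def sqBR (a : A) (b : B) : D.R := (D.exists_br a b).choose

lemma sqBR_bot (a : A) (b : B) : D.bot (D.sqBR a b) = a := (D.exists_br a b).choose_spec.1
lemma sqBR_rgt (a : A) (b : B) : D.rgt (D.sqBR a b) = b := (D.exists_br a b).choose_spec.2

lemma M1_eq_one {s r : D.R} (h1 : D.lft s = D.rgt r) (h2 : D.bot s ≠ D.invA (D.bot r)) :
    D.M1 s r = 1 := by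
  simp only [M1]; exact if_pos ⟨h1, h2⟩

lemma M2_eq_one {s r : D.R} (h1 : D.bot s = D.top r) (h2 : D.rgt s ≠ D.invB (D.rgt r)) :
    D.M2 s r = 1 := by
  simp only [M2]; exact if_pos ⟨h1, h2⟩

lemma of_M1 {s r : D.R} (h : D.M1 s r = 1) :
    D.lft s = D.rgt r ∧ D.bot s ≠ D.invA (D.bot r) := by
  simp only [M1] at h
  split_ifs at h with hc
  · exact hc
  · exact absurd h (by norm_num)

lemma of_M2 {s r : D.R} (h : D.M2 s r = 1) :
    D.bot s = D.top r ∧ D.rgt s ≠ D.invB (D.rgt r) := by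
  simp only [M2] at h
  split_ifs at h with hc
  · exact hc
  · exact absurd h (by norm_num)

/-- horizontal step: the square to the right with prescribed bottom edge -/
noncomputable def hstep (r : D.R) (c : A) : D.R := D.sqBL c (D.rgt r)

lemma M1_hstep {r : D.R} {c : A} (h : c ≠ D.invA (D.bot r)) : D.M1 (D.hstep r c) r = 1 :=
  D.M1_eq_one (D.sqBL_lft c (D.rgt r)) (by rw [hstep, sqBL_bot]; exact h)

/-- vertical step: the square above with prescribed right edge -/
noncomputable def vstep (r : D.R) (d : B) : D.R := D.sqBR (D.top r) d

lemma M2_vstep {r : D.R} {d : B} (h : d ≠ D.invB (D.rgt r)) : D.M2 (D.vstep r d) r = 1 :=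
  D.M2_eq_one (D.sqBR_bot _ _) (by rw [vstep, sqBR_rgt]; exact h)

/-- filling the upper-right square of a square grid cell -/
noncomputable def fill (s t : D.R) : D.R := D.sqBL (D.top s) (D.rgt t)

lemma fill_spec {r s t : D.R} (hs : D.M1 s r = 1) (ht : D.M2 t r = 1) :
    D.M1 (D.fill s t) t = 1 ∧ D.M2 (D.fill s t) s = 1 := by
  obtain ⟨hs1, hs2⟩ := D.of_M1 hs
  obtain ⟨ht1, ht2⟩ := D.of_M2 ht
  constructor
  · apply D.M1_eq_one (by rw [fill, sqBL_lft])
    rw [fill, sqBL_bot]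
    intro h
    obtain ⟨h1, -, -⟩ := D.cond_i _ _ _ _ (D.mem_R r)
    have hsx : s = ⟨(D.invA (D.bot r), D.lft r, D.rgt r, D.invA (D.top r)), h1⟩ := by
      apply D.inj_tl
      · show D.top s = D.invA (D.top r)
        rw [h, ht1]
      · exact hs1
    apply hs2
    rw [hsx]; rfl
  · apply D.M2_eq_one (by rw [fill, sqBL_bot])
    intro h
    obtain ⟨-, -, h3⟩ := D.cond_i _ _ _ _ (D.mem_R s)
    have hux : D.fill s t = ⟨(D.top s, D.invB (D.rgt s), D.invB (D.lft s), D.bot s), h3⟩ := by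
      apply D.inj_br
      · rw [fill, sqBL_bot]; rfl
      · exact h
    have hl : D.rgt t = D.invB (D.lft s) := by
      have := congrArg D.lft hux
      rw [fill, sqBL_lft] at this
      exact this
    rw [hs1] at hl
    exact ht2 hl

lemma exists_ne2' {α : Type} [Fintype α] [DecidableEq α] (h : 3 ≤ Fintype.card α) (u v : α) :
    ∃ c, c ≠ u ∧ c ≠ v := by
  have hcard : 0 < (Finset.univ \ {u, v} : Finset α).card := by
    rw [Finset.card_sdiff_of_subset (Finset.subset_univ _)]
    have h2 : ({u, v} : Finset α).card ≤ 2 := by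
      apply le_trans (Finset.card_insert_le _ _); simp
    have := Finset.card_univ (α := α)
    omega
  obtain ⟨c, hc⟩ := Finset.card_pos.mp hcard
  simp only [Finset.mem_sdiff, Finset.mem_univ, true_and, Finset.mem_insert,
    Finset.mem_singleton, not_or] at hc
  exact ⟨c, hc⟩

include D in
lemma cardA3 : 3 ≤ Fintype.card A := by have h1 := D.cardA; have h2 := D.four_le_m; omega
include D in
lemma cardB3 : 3 ≤ Fintype.card B := by have h1 := D.cardB; have h2 := D.four_le_n; omega

noncomputable def pickA (u v : A) : A := (exists_ne2' D.cardA3 u v).choose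
lemma pickA_ne1 (u v : A) : D.pickA u v ≠ u := (exists_ne2' D.cardA3 u v).choose_spec.1
lemma pickA_ne2 (u v : A) : D.pickA u v ≠ v := (exists_ne2' D.cardA3 u v).choose_spec.2

noncomputable def pickB (u v : B) : B := (exists_ne2' D.cardB3 u v).choose
lemma pickB_ne1 (u v : B) : D.pickB u v ≠ u := (exists_ne2' D.cardB3 u v).choose_spec.1
lemma pickB_ne2 (u v : B) : D.pickB u v ≠ v := (exists_ne2' D.cardB3 u v).choose_spec.2

/-- generic horizontal step avoiding a given bottom edge -/
noncomputable def hA (avoid : A) (r : D.R) : D.R :=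
  D.hstep r (D.pickA (D.invA (D.bot r)) avoid)

lemma M1_hA (avoid : A) (r : D.R) : D.M1 (D.hA avoid r) r = 1 :=
  D.M1_hstep (D.pickA_ne1 _ _)

lemma bot_hA (avoid : A) (r : D.R) : D.bot (D.hA avoid r) ≠ avoid := by
  rw [hA, hstep, sqBL_bot]; exact D.pickA_ne2 _ _

/-- generic vertical step avoiding a given right edge -/
noncomputable def vB (avoid : B) (r : D.R) : D.R :=
  D.vstep r (D.pickB (D.invB (D.rgt r)) avoid)

lemma M2_vB (avoid : B) (r : D.R) : D.M2 (D.vB avoid r) r = 1 :=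
  D.M2_vstep (D.pickB_ne1 _ _)

lemma rgt_vB (avoid : B) (r : D.R) : D.rgt (D.vB avoid r) ≠ avoid := by
  rw [vB, vstep, sqBR_rgt]; exact D.pickB_ne2 _ _

/-- the word on the whole quadrant determined by a bottom row and a left column -/
noncomputable def Wd (row col : ℕ → D.R) : ℕ → ℕ → D.R
  | 0, x => row x
  | y+1, 0 => col (y+1)
  | y+1, x+1 => D.fill (Wd row col y (x+1)) (Wd row col (y+1) x)

lemma Wd_zero (row col : ℕ → D.R) (x : ℕ) : D.Wd row col 0 x = row x := by rw [Wd]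

lemma Wd_succ_zero (row col : ℕ → D.R) (y : ℕ) : D.Wd row col (y+1) 0 = col (y+1) := by
  rw [Wd]

lemma Wd_succ_succ (row col : ℕ → D.R) (y x : ℕ) :
    D.Wd row col (y+1) (x+1) = D.fill (D.Wd row col y (x+1)) (D.Wd row col (y+1) x) := by
  rw [Wd]

lemma Wd_valid (row col : ℕ → D.R)
    (hrow : ∀ x, D.M1 (row (x+1)) (row x) = 1)
    (hcol : ∀ y, D.M2 (col (y+1)) (col y) = 1)
    (hbase : col 0 = row 0) :
    ∀ y, (∀ x, D.M1 (D.Wd row col y (x+1)) (D.Wd row col y x) = 1) ∧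
      (∀ x, D.M2 (D.Wd row col (y+1) x) (D.Wd row col y x) = 1) := by
  intro y
  induction y with
  | zero =>
    constructor
    · intro x; rw [Wd_zero, Wd_zero]; exact hrow x
    · intro x
      induction x with
      | zero =>
        rw [Wd_succ_zero, Wd_zero, ← hbase]; exact hcol 0
      | succ x ihx =>
        rw [Wd_succ_succ]
        refine (D.fill_spec (r := D.Wd row col 0 x) ?_ ihx).2
        rw [Wd_zero, Wd_zero]; exact hrow x
  | succ y ih =>
    obtain ⟨ih1, ih2⟩ := ih
    have h1 : ∀ x, D.M1 (D.Wd row col (y+1) (x+1)) (D.Wd row col (y+1) x) = 1 := by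
      intro x
      rw [Wd_succ_succ]
      exact (D.fill_spec (ih1 x) (ih2 x)).1
    refine ⟨h1, ?_⟩
    intro x
    induction x with
    | zero => rw [Wd_succ_zero, Wd_succ_zero]; exact hcol (y+1)
    | succ x ihx =>
      rw [show y+1+1 = y+2 from rfl, Wd_succ_succ]
      exact (D.fill_spec (h1 x) ihx).2

lemma Wd_agree (row col₁ col₂ : ℕ → D.R) (Y : ℕ) (h : ∀ y ≤ Y, col₁ y = col₂ y) :
    ∀ y ≤ Y, ∀ x, D.Wd row col₁ y x = D.Wd row col₂ y x := by
  intro y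
  induction y with
  | zero => intro _ x; rw [Wd_zero, Wd_zero]
  | succ y ih =>
    intro hy x
    induction x with
    | zero => rw [Wd_succ_zero, Wd_succ_zero]; exact h (y+1) hy
    | succ x ihx =>
      rw [Wd_succ_succ, Wd_succ_succ, ih (by omega) (x+1), ihx]

lemma Wd_prop (row col₁ col₂ : ℕ → D.R) (Y : ℕ)
    (hagree : ∀ x, D.Wd row col₁ Y x = D.Wd row col₂ Y x)
    (hne : col₁ (Y+1) ≠ col₂ (Y+1))
    (hbot : D.bot (col₁ (Y+1)) = D.bot (col₂ (Y+1))) :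
    ∀ x, D.Wd row col₁ (Y+1) x ≠ D.Wd row col₂ (Y+1) x ∧
      D.bot (D.Wd row col₁ (Y+1) x) = D.bot (D.Wd row col₂ (Y+1) x) := by
  intro x
  induction x with
  | zero => rw [Wd_succ_zero, Wd_succ_zero]; exact ⟨hne, hbot⟩
  | succ x ihx =>
    obtain ⟨hne', hbot'⟩ := ihx
    have hrgt : D.rgt (D.Wd row col₁ (Y+1) x) ≠ D.rgt (D.Wd row col₂ (Y+1) x) := by
      intro h; exact hne' (D.inj_br hbot' h)
    constructor
    · rw [Wd_succ_succ, Wd_succ_succ]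
      intro h
      apply hrgt
      have := congrArg D.lft h
      rw [fill, fill, sqBL_lft, sqBL_lft] at this
      exact this
    · rw [Wd_succ_succ, Wd_succ_succ, fill, fill, sqBL_bot, sqBL_bot, hagree (x+1)]

lemma exists_two' {α : Type} [Fintype α] [DecidableEq α] (h : 3 ≤ Fintype.card α) (z : α) :
    ∃ u v, u ≠ v ∧ u ≠ z ∧ v ≠ z := by
  have hcard : 1 < (Finset.univ \ {z} : Finset α).card := by
    rw [Finset.card_sdiff_of_subset (Finset.subset_univ _)]
    have := Finset.card_univ (α := α)
    simp only [Finset.card_singleton]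
    omega
  obtain ⟨u, hu, v, hv, huv⟩ := Finset.one_lt_card.mp hcard
  simp only [Finset.mem_sdiff, Finset.mem_univ, true_and, Finset.mem_singleton] at hu hv
  exact ⟨u, v, huv, hu, hv⟩

lemma Wd_col (row col : ℕ → D.R) (hbase : col 0 = row 0) (y : ℕ) :
    D.Wd row col y 0 = col y := by
  cases y with
  | zero => rw [Wd_zero, hbase]
  | succ y => rw [Wd_succ_zero]

/-- generic bottom row avoiding the bottom edge of the start square -/
noncomputable def rowg (r0 : D.R) : ℕ → D.R := fun x => (D.hA (D.bot r0))^[x] r0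

lemma rowg_zero (r0 : D.R) : D.rowg r0 0 = r0 := rfl

lemma rowg_valid (r0 : D.R) : ∀ x, D.M1 (D.rowg r0 (x+1)) (D.rowg r0 x) = 1 := by
  intro x
  show D.M1 ((D.hA (D.bot r0))^[x+1] r0) _ = 1
  rw [Function.iterate_succ_apply']
  exact D.M1_hA _ _

lemma rowg_ne (r0 : D.R) : ∀ x, D.rowg r0 (x+1) ≠ r0 := by
  intro x h
  have h2 : D.rowg r0 (x+1) = D.hA (D.bot r0) (D.rowg r0 x) := by
    show (D.hA (D.bot r0))^[x+1] r0 = _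
    rw [Function.iterate_succ_apply']
    rfl
  exact D.bot_hA (D.bot r0) (D.rowg r0 x) (by rw [← h2, h])



/-- generic column avoiding a given right edge -/
noncomputable def colg (b0 : B) (s : D.R) : ℕ → D.R := fun y => (D.vB b0)^[y] s

lemma colg_zero (b0 : B) (s : D.R) : D.colg b0 s 0 = s := rfl

lemma colg_valid (b0 : B) (s : D.R) : ∀ y, D.M2 (D.colg b0 s (y+1)) (D.colg b0 s y) = 1 := by
  intro y
  show D.M2 ((D.vB b0)^[y+1] s) _ = 1
  rw [Function.iterate_succ_apply']
  exact D.M2_vB _ _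

lemma colg_rgt (b0 : B) (s : D.R) : ∀ y, D.rgt (D.colg b0 s (y+1)) ≠ b0 := by
  intro y
  have h2 : D.colg b0 s (y+1) = D.vB b0 (D.colg b0 s y) := by
    show (D.vB b0)^[y+1] s = _
    rw [Function.iterate_succ_apply']
    rfl
  rw [h2]
  exact D.rgt_vB _ _

include D in
lemma nonemptyA : Nonempty A := by
  have h1 := D.cardA; have h2 := D.four_le_m
  exact Fintype.card_pos_iff.mp (by omega)

include D in
lemma nonemptyB : Nonempty B := by
  have h1 := D.cardB; have h2 := D.four_le_n
  exact Fintype.card_pos_iff.mp (by omega)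

/-- some square -/
noncomputable def r₀ : D.R := D.sqBL (Classical.choice D.nonemptyA) (Classical.choice D.nonemptyB)

/-- splicing two columns -/
def splice {α : Type} (f : ℕ → α) (k : ℕ) (g : ℕ → α) : ℕ → α :=
  fun y => if y ≤ k then f y else g (y - (k+1))

lemma splice_valid (f g : ℕ → D.R) (k : ℕ)
    (hf : ∀ y, D.M2 (f (y+1)) (f y) = 1)
    (hg : ∀ j, D.M2 (g (j+1)) (g j) = 1)
    (hlink : D.M2 (g 0) (f k) = 1) :
    ∀ y, D.M2 (splice f k g (y+1)) (splice f k g y) = 1 := by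
  intro y
  rcases lt_trichotomy y k with h | h | h
  · simp only [splice, if_pos (by omega : y + 1 ≤ k), if_pos (by omega : y ≤ k)]
    exact hf y
  · subst h
    simp only [splice, if_neg (by omega : ¬ y + 1 ≤ y), if_pos (le_refl y), Nat.sub_self]
    exact hlink
  · simp only [splice, if_neg (by omega : ¬ y + 1 ≤ k), if_neg (by omega : ¬ y ≤ k)]
    rw [show y + 1 - (k+1) = (y - (k+1)) + 1 from by omega]
    exact hg _

lemma corner_main (m₁ m₂ : ℕ) (h : m₁ ≠ 0 ∨ m₂ ≠ 0) :
    ∃ row col : ℕ → D.R, (∀ x, D.M1 (row (x+1)) (row x) = 1) ∧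
      (∀ y, D.M2 (col (y+1)) (col y) = 1) ∧ col 0 = row 0 ∧
      D.Wd row col m₂ m₁ ≠ D.Wd row col 0 0 := by
  set r0 := D.r₀ with hr0
  rcases Nat.eq_zero_or_pos m₂ with hm2 | hm2
  · subst hm2
    obtain ⟨k, rfl⟩ : ∃ k, m₁ = k + 1 := ⟨m₁ - 1, by omega⟩
    refine ⟨D.rowg r0, D.colg (D.rgt r0) r0, D.rowg_valid r0, D.colg_valid _ _, rfl, ?_⟩
    rw [Wd_zero, Wd_zero]
    exact D.rowg_ne r0 k
  rcases Nat.eq_zero_or_pos m₁ with hm1 | hm1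
  · subst hm1
    obtain ⟨k, rfl⟩ : ∃ k, m₂ = k + 1 := ⟨m₂ - 1, by omega⟩
    refine ⟨D.rowg r0, D.colg (D.rgt r0) r0, D.rowg_valid r0, D.colg_valid _ _, rfl, ?_⟩
    rw [D.Wd_col (D.rowg r0) (D.colg (D.rgt r0) r0) (by rfl), Wd_zero]
    intro hx
    exact D.colg_rgt (D.rgt r0) r0 k (congrArg D.rgt hx)
  obtain ⟨k1, rfl⟩ : ∃ k, m₁ = k + 1 := ⟨m₁ - 1, by omega⟩
  obtain ⟨k2, rfl⟩ : ∃ k, m₂ = k + 1 := ⟨m₂ - 1, by omega⟩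
  set row := D.rowg r0 with hrowdef
  set colb := D.colg (D.rgt r0) r0 with hcolbdef
  set q := colb k2 with hq
  obtain ⟨d₁, d₂, hd, hd1, hd2⟩ := exists_two' D.cardB3 (D.invB (D.rgt q))
  set col₁ := splice colb k2 (D.colg (D.rgt r0) (D.vstep q d₁)) with hc1def
  set col₂ := splice colb k2 (D.colg (D.rgt r0) (D.vstep q d₂)) with hc2def
  have hcol₁ : ∀ y, D.M2 (col₁ (y+1)) (col₁ y) = 1 :=
    D.splice_valid _ _ _ (D.colg_valid _ _) (D.colg_valid _ _) (D.M2_vstep hd1)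
  have hcol₂ : ∀ y, D.M2 (col₂ (y+1)) (col₂ y) = 1 :=
    D.splice_valid _ _ _ (D.colg_valid _ _) (D.colg_valid _ _) (D.M2_vstep hd2)
  have hbase₁ : col₁ 0 = row 0 := by
    show (if 0 ≤ k2 then colb 0 else _) = row 0
    rw [if_pos (Nat.zero_le _)]
    rfl
  have hbase₂ : col₂ 0 = row 0 := by
    show (if 0 ≤ k2 then colb 0 else _) = row 0
    rw [if_pos (Nat.zero_le _)]
    rfl
  have hagree0 : ∀ y ≤ k2, col₁ y = col₂ y := by
    intro y hy
    show (if y ≤ k2 then colb y else _) = (if y ≤ k2 then colb y else _)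
    rw [if_pos hy, if_pos hy]
  have hagree : ∀ x, D.Wd row col₁ k2 x = D.Wd row col₂ k2 x :=
    D.Wd_agree row col₁ col₂ k2 hagree0 k2 le_rfl
  have htop₁ : col₁ (k2+1) = D.vstep q d₁ := by
    show (if k2 + 1 ≤ k2 then _ else _) = _
    rw [if_neg (by omega), Nat.sub_self]
    rfl
  have htop₂ : col₂ (k2+1) = D.vstep q d₂ := by
    show (if k2 + 1 ≤ k2 then _ else _) = _
    rw [if_neg (by omega), Nat.sub_self]
    rfl
  have hne0 : col₁ (k2+1) ≠ col₂ (k2+1) := by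
    rw [htop₁, htop₂]
    intro hx
    apply hd
    have := congrArg D.rgt hx
    rwa [vstep, vstep, sqBR_rgt, sqBR_rgt] at this
  have hbot0 : D.bot (col₁ (k2+1)) = D.bot (col₂ (k2+1)) := by
    rw [htop₁, htop₂, vstep, vstep, sqBR_bot, sqBR_bot]
  have hprop := (D.Wd_prop row col₁ col₂ k2 hagree hne0 hbot0 (k1+1)).1
  by_cases hc : D.Wd row col₁ (k2+1) (k1+1) = D.Wd row col₁ 0 0
  · refine ⟨row, col₂, D.rowg_valid r0, hcol₂, hbase₂, ?_⟩
    intro hx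
    rw [Wd_zero] at hx hc
    exact hprop (hc.trans hx.symm)
  · exact ⟨row, col₁, D.rowg_valid r0, hcol₁, hbase₁, hc⟩

lemma anti_main (m₁ m₂ : ℕ) (h1 : m₁ ≠ 0) (h2 : m₂ ≠ 0) :
    ∃ row col : ℕ → D.R, (∀ x, D.M1 (row (x+1)) (row x) = 1) ∧
      (∀ y, D.M2 (col (y+1)) (col y) = 1) ∧ col 0 = row 0 ∧
      D.Wd row col m₂ 0 ≠ D.Wd row col 0 m₁ := by
  set r0 := D.r₀
  set row := D.rowg r0 with hrowdef
  set t := row m₁ with ht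
  refine ⟨row, D.colg (D.rgt t) r0, D.rowg_valid r0, D.colg_valid _ _, rfl, ?_⟩
  obtain ⟨k, rfl⟩ : ∃ k, m₂ = k + 1 := ⟨m₂ - 1, by omega⟩
  rw [D.Wd_col row (D.colg (D.rgt t) r0) (by rfl), Wd_zero]
  intro hx
  exact D.colg_rgt (D.rgt t) r0 k (congrArg D.rgt hx)

lemma glue (p : ℤ × ℤ) (row col : ℕ → D.R)
    (hrow : ∀ x, D.M1 (row (x+1)) (row x) = 1)
    (hcol : ∀ y, D.M2 (col (y+1)) (col y) = 1)
    (hbase : col 0 = row 0)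
    (m₁ m₂ : ℕ) (l1 l2 : ℤ)
    (hb1 : 0 ≤ l1) (hb2 : l1 ≤ (m₁ : ℤ)) (hb3 : 0 ≤ l2) (hb4 : l2 ≤ (m₂ : ℤ))
    (hc1 : 0 ≤ l1 + p.1) (hc2 : l1 + p.1 ≤ (m₁ : ℤ))
    (hc3 : 0 ≤ l2 + p.2) (hc4 : l2 + p.2 ≤ (m₂ : ℤ))
    (hne : D.Wd row col l2.toNat l1.toNat ≠ D.Wd row col (l2 + p.2).toNat (l1 + p.1).toNat) :
    ∃ (m₁ m₂ : ℕ) (w : ℤ × ℤ → D.R) (l : ℤ × ℤ),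
      (∀ x y : ℤ, 0 ≤ x → x + 1 ≤ (m₁ : ℤ) → 0 ≤ y → y ≤ (m₂ : ℤ) →
        D.M1 (w (x + 1, y)) (w (x, y)) = 1) ∧
      (∀ x y : ℤ, 0 ≤ x → x ≤ (m₁ : ℤ) → 0 ≤ y → y + 1 ≤ (m₂ : ℤ) →
        D.M2 (w (x, y + 1)) (w (x, y)) = 1) ∧
      (0 ≤ l.1 ∧ l.1 ≤ (m₁ : ℤ) ∧ 0 ≤ l.2 ∧ l.2 ≤ (m₂ : ℤ)) ∧
      (0 ≤ l.1 + p.1 ∧ l.1 + p.1 ≤ (m₁ : ℤ) ∧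
        0 ≤ l.2 + p.2 ∧ l.2 + p.2 ≤ (m₂ : ℤ)) ∧
      w l ≠ w (l + p) := by
  refine ⟨m₁, m₂, fun q => D.Wd row col q.2.toNat q.1.toNat, (l1, l2),
    ?_, ?_, ⟨hb1, hb2, hb3, hb4⟩, ⟨hc1, hc2, hc3, hc4⟩, ?_⟩
  · intro x y hx _ hy _
    show D.M1 (D.Wd row col y.toNat (x+1).toNat) (D.Wd row col y.toNat x.toNat) = 1
    rw [show (x+1).toNat = x.toNat + 1 from by omega]
    exact (D.Wd_valid row col hrow hcol hbase y.toNat).1 x.toNat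
  · intro x y hx _ hy _
    show D.M2 (D.Wd row col (y+1).toNat x.toNat) (D.Wd row col y.toNat x.toNat) = 1
    rw [show (y+1).toNat = y.toNat + 1 from by omega]
    exact (D.Wd_valid row col hrow hcol hbase y.toNat).2 x.toNat
  · exact hne

end VHDatum

/-- aperiodicity, condition (H3): for every nonzero `p ∈ ℤ²`
there is a word `w` (a function on a box `[0,m₁] × [0,m₂] ⊆ ℤ²` with values in
`R` compatible with the transition matrices) and a point `l` with both `l` and
`l + p` in the box, such that `w(l) ≠ w(l+p)`. -/


theorem VHDatum.not_periodic (D : VHDatum m n A B) (p : ℤ × ℤ) (hp : p ≠ 0) :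
    ∃ (m₁ m₂ : ℕ) (w : ℤ × ℤ → D.R) (l : ℤ × ℤ),
      (∀ x y : ℤ, 0 ≤ x → x + 1 ≤ (m₁ : ℤ) → 0 ≤ y → y ≤ (m₂ : ℤ) →
        D.M1 (w (x + 1, y)) (w (x, y)) = 1) ∧
      (∀ x y : ℤ, 0 ≤ x → x ≤ (m₁ : ℤ) → 0 ≤ y → y + 1 ≤ (m₂ : ℤ) →
        D.M2 (w (x, y + 1)) (w (x, y)) = 1) ∧
      (0 ≤ l.1 ∧ l.1 ≤ (m₁ : ℤ) ∧ 0 ≤ l.2 ∧ l.2 ≤ (m₂ : ℤ)) ∧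
      (0 ≤ l.1 + p.1 ∧ l.1 + p.1 ≤ (m₁ : ℤ) ∧
        0 ≤ l.2 + p.2 ∧ l.2 + p.2 ≤ (m₂ : ℤ)) ∧
      w l ≠ w (l + p) := by
  have hp' : ¬(p.1 = 0 ∧ p.2 = 0) := fun h => hp (Prod.ext_iff.mpr ⟨h.1, h.2⟩)
  rcases lt_trichotomy p.1 0 with h1 | h1 | h1 <;>
    rcases lt_trichotomy p.2 0 with h2 | h2 | h2
  · -- p.1 < 0, p.2 < 0
    obtain ⟨row, col, hr, hc, hb, hne⟩ := D.corner_main p.1.natAbs p.2.natAbs (Or.inl (by omega))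
    refine D.glue p row col hr hc hb p.1.natAbs p.2.natAbs (p.1.natAbs : ℤ) (p.2.natAbs : ℤ)
      (by omega) (by omega) (by omega) (by omega) (by omega) (by omega) (by omega) (by omega) ?_
    rw [show ((p.2.natAbs : ℤ)).toNat = p.2.natAbs from by omega,
        show ((p.1.natAbs : ℤ)).toNat = p.1.natAbs from by omega,
        show ((p.2.natAbs : ℤ) + p.2).toNat = 0 from by omega,
        show ((p.1.natAbs : ℤ) + p.1).toNat = 0 from by omega]
    exact hne
  · -- p.1 < 0, p.2 = 0
    obtain ⟨row, col, hr, hc, hb, hne⟩ := D.corner_main p.1.natAbs 0 (Or.inl (by omega))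
    refine D.glue p row col hr hc hb p.1.natAbs 0 (p.1.natAbs : ℤ) 0
      (by omega) (by omega) (by omega) (by omega) (by omega) (by omega) (by omega) (by omega) ?_
    rw [show ((0 : ℤ)).toNat = 0 from by omega,
        show ((p.1.natAbs : ℤ)).toNat = p.1.natAbs from by omega,
        show ((0 : ℤ) + p.2).toNat = 0 from by omega,
        show ((p.1.natAbs : ℤ) + p.1).toNat = 0 from by omega]
    exact hne
  · -- p.1 < 0, p.2 > 0
    obtain ⟨row, col, hr, hc, hb, hne⟩ := D.anti_main p.1.natAbs p.2.natAbs (by omega) (by omega)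
    refine D.glue p row col hr hc hb p.1.natAbs p.2.natAbs (p.1.natAbs : ℤ) 0
      (by omega) (by omega) (by omega) (by omega) (by omega) (by omega) (by omega) (by omega) ?_
    rw [show ((0 : ℤ)).toNat = 0 from by omega,
        show ((p.1.natAbs : ℤ)).toNat = p.1.natAbs from by omega,
        show ((0 : ℤ) + p.2).toNat = p.2.natAbs from by omega,
        show ((p.1.natAbs : ℤ) + p.1).toNat = 0 from by omega]
    exact hne.symm
  · -- p.1 = 0, p.2 < 0
    obtain ⟨row, col, hr, hc, hb, hne⟩ := D.corner_main 0 p.2.natAbs (Or.inr (by omega))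
    refine D.glue p row col hr hc hb 0 p.2.natAbs 0 (p.2.natAbs : ℤ)
      (by omega) (by omega) (by omega) (by omega) (by omega) (by omega) (by omega) (by omega) ?_
    rw [show ((p.2.natAbs : ℤ)).toNat = p.2.natAbs from by omega,
        show ((0 : ℤ)).toNat = 0 from by omega,
        show ((p.2.natAbs : ℤ) + p.2).toNat = 0 from by omega,
        show ((0 : ℤ) + p.1).toNat = 0 from by omega]
    exact hne
  · -- p = 0
    exact absurd ⟨h1, h2⟩ hp'
  · -- p.1 = 0, p.2 > 0
    obtain ⟨row, col, hr, hc, hb, hne⟩ := D.corner_main 0 p.2.natAbs (Or.inr (by omega))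
    refine D.glue p row col hr hc hb 0 p.2.natAbs 0 0
      (by omega) (by omega) (by omega) (by omega) (by omega) (by omega) (by omega) (by omega) ?_
    rw [show ((0 : ℤ)).toNat = 0 from by omega,
        show ((0 : ℤ) + p.2).toNat = p.2.natAbs from by omega,
        show ((0 : ℤ) + p.1).toNat = 0 from by omega]
    exact hne.symm
  · -- p.1 > 0, p.2 < 0
    obtain ⟨row, col, hr, hc, hb, hne⟩ := D.anti_main p.1.natAbs p.2.natAbs (by omega) (by omega)
    refine D.glue p row col hr hc hb p.1.natAbs p.2.natAbs 0 (p.2.natAbs : ℤ)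
      (by omega) (by omega) (by omega) (by omega) (by omega) (by omega) (by omega) (by omega) ?_
    rw [show ((p.2.natAbs : ℤ)).toNat = p.2.natAbs from by omega,
        show ((0 : ℤ)).toNat = 0 from by omega,
        show ((p.2.natAbs : ℤ) + p.2).toNat = 0 from by omega,
        show ((0 : ℤ) + p.1).toNat = p.1.natAbs from by omega]
    exact hne
  · -- p.1 > 0, p.2 = 0
    obtain ⟨row, col, hr, hc, hb, hne⟩ := D.corner_main p.1.natAbs 0 (Or.inl (by omega))
    refine D.glue p row col hr hc hb p.1.natAbs 0 0 0
      (by omega) (by omega) (by omega) (by omega) (by omega) (by omega) (by omega) (by omega) ?_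
    rw [show ((0 : ℤ)).toNat = 0 from by omega,
        show ((0 : ℤ) + p.2).toNat = 0 from by omega,
        show ((0 : ℤ) + p.1).toNat = p.1.natAbs from by omega]
    exact hne.symm
  · -- p.1 > 0, p.2 > 0
    obtain ⟨row, col, hr, hc, hb, hne⟩ := D.corner_main p.1.natAbs p.2.natAbs (Or.inl (by omega))
    refine D.glue p row col hr hc hb p.1.natAbs p.2.natAbs 0 0
      (by omega) (by omega) (by omega) (by omega) (by omega) (by omega) (by omega) (by omega) ?_
    rw [show ((0 : ℤ)).toNat = 0 from by omega,
        show ((0 : ℤ) + p.2).toNat = p.2.natAbs from by omega,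
        show ((0 : ℤ) + p.1).toNat = p.1.natAbs from by omega]
    exact hne.symm
end

section
/- Let (A, B, R) be a VH-datum with parameters (m,n) and let M₁, M₂ be its transition matrices, regarded as integer matrices indexed by R×R, and let I be the identity matrix. Then the cokernel of the ℤ-linear map ℤ^R ⊕ ℤ^R → ℤ^R given by (x,y) ↦ (I−M₁)x + (I−M₂)y is isomorphic, as an abelian group, to the cokernel of the ℤ-linear map (x,y) ↦ (I−M₁ᵗ)x + (I−M₂ᵗ)y, where M_jᵗ denotes the transpose of M_j. -/
variable {m n : ℕ} {A B : Type} [Fintype A] [Fintype B] [DecidableEq A] [DecidableEq B]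

/-!
The map `σ (a, b, b', a') = (a'⁻¹, b'⁻¹, b⁻¹, a⁻¹)` reads the relation `ab = b'a'` backwards;
by (i) it is an involution of `R`, and by (iii) it reverses both transition relations:
`Mⱼ (σ s) (σ r) = Mⱼ r s`. So the permutation of coordinates by `σ` conjugates `I - Mⱼ` to
`I - Mⱼᵀ` for `j = 1, 2` simultaneously, and carries one image onto the other.
-/

open Matrix

theorem Matrix.range_mulVecLin_reindex {R k l m n : Type*} [CommSemiring R] [Fintype l]
    [Fintype n] (e₁ : k ≃ m) (e₂ : l ≃ n) (M : Matrix k l R) :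
    LinearMap.range (reindex e₁ e₂ M).mulVecLin =
      (LinearMap.range M.mulVecLin).map
        (LinearEquiv.funCongrLeft R R e₁.symm : (k → R) →ₗ[R] m → R) := by
  rw [mulVecLin_reindex, LinearMap.range_comp, LinearMap.range_comp, LinearEquiv.range,
    Submodule.map_top]

theorem Matrix.range_coprod_mulVecLin_reindex {R k l l' m n n' : Type*} [CommSemiring R]
    [Fintype l] [Fintype l'] [Fintype n] [Fintype n'] (e₁ : k ≃ m) (e₂ : l ≃ n) (e₃ : l' ≃ n')
    (M : Matrix k l R) (N : Matrix k l' R) :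
    LinearMap.range ((reindex e₁ e₂ M).mulVecLin.coprod (reindex e₁ e₃ N).mulVecLin) =
      (LinearMap.range (M.mulVecLin.coprod N.mulVecLin)).map
        (LinearEquiv.funCongrLeft R R e₁.symm : (k → R) →ₗ[R] m → R) := by
  rw [LinearMap.range_coprod, LinearMap.range_coprod, Submodule.map_sup,
    range_mulVecLin_reindex, range_mulVecLin_reindex]

namespace VHDatum

variable (D : VHDatum m n A B)

theorem invA_involutive : Function.Involutive D.invA := D.invA_invA

theorem invB_involutive : Function.Involutive D.invB := D.invB_invB

/-- Both sides say that `(c, b', d', c')` is the square `(a⁻¹, b', b, a'⁻¹)` of (i), which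
(iii) pins down by its edges `(a⁻¹, b')`, resp. `(a'⁻¹, b')`. -/
theorem eq_invA_iff_eq_invA {a a' c c' : A} {b b' d' : B} (hr : (a, b, b', a') ∈ D.R)
    (hs : (c, b', d', c') ∈ D.R) : c = D.invA a ↔ c' = D.invA a' := by
  have ht : (D.invA a, b', b, D.invA a') ∈ D.R := (D.cond_i a b b' a' hr).1
  constructor
  · intro hc
    exact congrArg (·.2.2.2) (D.cond_iii_ab.injOn hs ht (by simp [hc]))
  · intro hc'
    exact congrArg (·.1) (D.cond_iii_a'b.injOn hs ht (by simp [hc']))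

/-- Both sides say that `(c, d, d', a)` is the square `(a', b⁻¹, b'⁻¹, a)` of (i). -/
theorem eq_invB_iff_eq_invB {a a' c : A} {b b' d d' : B} (hr : (a, b, b', a') ∈ D.R)
    (hs : (c, d, d', a) ∈ D.R) : d = D.invB b ↔ d' = D.invB b' := by
  have ht : (a', D.invB b, D.invB b', a) ∈ D.R := (D.cond_i a b b' a' hr).2.2
  constructor
  · intro hd
    exact congrArg (·.2.2.1) (D.cond_iii_a'b.injOn hs ht (by simp [hd]))
  · intro hd'
    exact congrArg (·.2.1) (D.cond_iii_a'b'.injOn hs ht (by simp [hd']))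

def halfTurn (x : A × B × B × A) : A × B × B × A :=
  (D.invA x.2.2.2, D.invB x.2.2.1, D.invB x.2.1, D.invA x.1)

theorem halfTurn_involutive : Function.Involutive D.halfTurn := by
  rintro ⟨a, b, b', a'⟩
  simp [halfTurn, D.invA_invA, D.invB_invB]

theorem halfTurn_mem {x : A × B × B × A} (hx : x ∈ D.R) : D.halfTurn x ∈ D.R :=
  (D.cond_i _ _ _ _ hx).2.1

def halfTurnPerm : Equiv.Perm D.R :=
  Function.Involutive.toPerm (fun r => ⟨D.halfTurn r, D.halfTurn_mem r.2⟩)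
    fun r => Subtype.ext (D.halfTurn_involutive r)

theorem transpose_M1 : D.M1ᵀ = reindex D.halfTurnPerm D.halfTurnPerm D.M1 := by
  ext ⟨⟨c, d, d', c'⟩, hs⟩ ⟨⟨a, b, b', a'⟩, hr⟩
  simp only [M1, transpose_apply, reindex_apply, submatrix_apply, halfTurnPerm,
    Function.Involutive.toPerm_symm, Function.Involutive.coe_toPerm, halfTurn,
    D.invB_involutive.injective.eq_iff, D.invA_invA]
  refine if_congr ?_ rfl rfl
  rw [eq_comm (a := d)]
  refine and_congr_right fun hd => ?_
  subst hd
  rw [ne_eq, ne_eq, not_iff_not, eq_comm (a := a), D.invA_involutive.eq_iff,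
    D.eq_invA_iff_eq_invA hr hs, D.invA_involutive.eq_iff]

theorem transpose_M2 : D.M2ᵀ = reindex D.halfTurnPerm D.halfTurnPerm D.M2 := by
  ext ⟨⟨c, d, d', c'⟩, hs⟩ ⟨⟨a, b, b', a'⟩, hr⟩
  simp only [M2, transpose_apply, reindex_apply, submatrix_apply, halfTurnPerm,
    Function.Involutive.toPerm_symm, Function.Involutive.coe_toPerm, halfTurn,
    D.invA_involutive.injective.eq_iff, D.invB_invB]
  refine if_congr ?_ rfl rfl
  rw [eq_comm (a := c')]
  refine and_congr_right fun hc => ?_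
  subst hc
  rw [ne_eq, ne_eq, not_iff_not, eq_comm (a := b), D.invB_involutive.eq_iff,
    D.eq_invB_iff_eq_invB hr hs, D.invB_involutive.eq_iff]

end VHDatum

open Matrix in
/-- the cokernel of `(x,y) ↦ (I−M₁)x + (I−M₂)y` on `ℤ^R ⊕ ℤ^R`
is isomorphic as an abelian group to the cokernel of
`(x,y) ↦ (I−M₁ᵗ)x + (I−M₂ᵗ)y`. -/
theorem VHDatum.coker_transpose (D : VHDatum m n A B) :
    Nonempty
      (((D.R → ℤ) ⧸ LinearMap.range
          (LinearMap.coprod (Matrix.mulVecLin (1 - D.M1))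
            (Matrix.mulVecLin (1 - D.M2)))) ≃+
       ((D.R → ℤ) ⧸ LinearMap.range
          (LinearMap.coprod (Matrix.mulVecLin (1 - D.M1ᵀ))
            (Matrix.mulVecLin (1 - D.M2ᵀ))))) := by
  have h₁ : 1 - D.M1ᵀ = reindex D.halfTurnPerm D.halfTurnPerm (1 - D.M1) := by
    simp [D.transpose_M1, reindex_apply, submatrix_sub]
  have h₂ : 1 - D.M2ᵀ = reindex D.halfTurnPerm D.halfTurnPerm (1 - D.M2) := by
    simp [D.transpose_M2, reindex_apply, submatrix_sub]
  refine ⟨(Submodule.Quotient.equiv _ _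
    (LinearEquiv.funCongrLeft ℤ ℤ D.halfTurnPerm.symm) ?_).toAddEquiv⟩
  rw [h₁, h₂, range_coprod_mulVecLin_reindex]
end

section
/- Let (A, B, R) be a VH-datum with parameters (m,n) and let M₁, M₂ be its transition matrices. Let C be the abelian group ℤ^R / K, where K is the subgroup of ℤ^R generated by the vectors δ_r − Σ_{s∈R} M_j(s,r)·δ_s for r ∈ R and j ∈ {1,2} (δ_r being the standard basis vector at r), and let e ∈ C be the class of Σ_{r∈R} δ_r. Set k = gcd(m−2, n−2). Then there exists a group homomorphism φ : C → ℤ/kℤ such that φ sends the class of δ_r to 1 for every r ∈ R, and φ(e) = 4 in ℤ/kℤ. -/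
variable {m n : ℕ} {A B : Type} [Fintype A] [Fintype B] [DecidableEq A] [DecidableEq B]

/-- The subgroup `K ≤ ℤ^R` generated by the vectors
`δ_r − Σ_s M_j(s,r)·δ_s` for `r ∈ R`, `j = 1, 2`. -/
def VHDatum.K (D : VHDatum m n A B) : AddSubgroup (D.R → ℤ) :=
  AddSubgroup.closure
    {v : D.R → ℤ | ∃ r : D.R,
      v = (fun s => (if s = r then 1 else 0) - D.M1 s r) ∨
      v = (fun s => (if s = r then 1 else 0) - D.M2 s r)}

theorem Set.BijOn.bijective_subtype_of_univ {α β : Type*} {f : α → β} {s : Set α}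
    (h : Set.BijOn f s Set.univ) : Function.Bijective (fun x : s => f x) :=
  ⟨fun x y hxy => Subtype.ext (h.injOn x.2 y.2 hxy), fun b =>
    let ⟨a, ha, hab⟩ := h.surjOn (Set.mem_univ b)
    ⟨⟨a, ha⟩, hab⟩⟩

theorem Fintype.sum_prod_ite_eq_and_ne {α β : Type*} [Fintype α] [Fintype β]
    [DecidableEq α] [DecidableEq β] (a₀ : α) (b₀ : β) :
    ∑ p : α × β, (if p.1 = a₀ ∧ p.2 ≠ b₀ then (1 : ℤ) else 0) =
      Fintype.card β - 1 := by
  have hcard : 1 ≤ Fintype.card β := Fintype.card_pos_iff.mpr ⟨b₀⟩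
  rw [Fintype.sum_prod_type, Fintype.sum_eq_single a₀ (fun a ha => by simp [ha])]
  simp only [true_and]
  rw [Finset.sum_boole, Finset.filter_ne', Finset.card_erase_of_mem (Finset.mem_univ _),
    Finset.card_univ, Nat.cast_sub hcard, Nat.cast_one]

theorem ZMod.natCast_eq_two_of_dvd_sub {k m : ℕ} (hm : 2 ≤ m) (hk : k ∣ m - 2) :
    (m : ZMod k) = 2 := by
  obtain ⟨j, rfl⟩ := Nat.exists_eq_add_of_le hm
  rw [Nat.add_sub_cancel_left] at hk
  rw [Nat.cast_add, (ZMod.natCast_eq_zero_iff j k).mpr hk, add_zero, Nat.cast_ofNat]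

def intSumHom (ι S : Type*) [Fintype ι] [AddCommGroupWithOne S] : (ι → ℤ) →+ S :=
  ∑ i, (Int.castAddHom S).comp (Pi.evalAddMonoidHom (fun _ => ℤ) i)

theorem intSumHom_apply {ι S : Type*} [Fintype ι] [AddCommGroupWithOne S] (v : ι → ℤ) :
    intSumHom ι S v = ((∑ i, v i : ℤ) : S) := by
  simp [intSumHom, Int.cast_sum]

namespace VHDatum

variable (D : VHDatum m n A B)

theorem bijective_ab : Function.Bijective (fun s : D.R =>
    ((s : A × B × B × A).1, (s : A × B × B × A).2.1)) :=
  D.cond_iii_ab.bijective_subtype_of_univ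

theorem bijective_b'a : Function.Bijective (fun s : D.R =>
    ((s : A × B × B × A).2.2.1, (s : A × B × B × A).1)) :=
  (Equiv.prodComm A B).bijective.comp D.cond_iii_ab'.bijective_subtype_of_univ

theorem card_R : Fintype.card D.R = m * n := by
  rw [Fintype.card_of_bijective D.bijective_ab, Fintype.card_prod, D.cardA, D.cardB]

theorem sum_M1_col (r : D.R) : ∑ s, D.M1 s r = (m : ℤ) - 1 := by
  obtain ⟨⟨a, b, -, -⟩, -⟩ := r
  rw [Fintype.sum_bijective _ D.bijective_b'a (D.M1 · _)
    (fun p => if p.1 = b ∧ p.2 ≠ D.invA a then 1 else 0) fun _ => rfl,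
    Fintype.sum_prod_ite_eq_and_ne, D.cardA]

theorem sum_M2_col (r : D.R) : ∑ s, D.M2 s r = (n : ℤ) - 1 := by
  obtain ⟨⟨-, b, -, a'⟩, -⟩ := r
  rw [Fintype.sum_bijective _ D.bijective_ab (D.M2 · _)
    (fun p => if p.1 = a' ∧ p.2 ≠ D.invB b then 1 else 0) fun _ => rfl,
    Fintype.sum_prod_ite_eq_and_ne, D.cardB]

theorem K_le_ker_intSumHom {S : Type*} [CommRing S] (hm : (m : S) = 2) (hn : (n : S) = 2) :
    D.K ≤ (intSumHom D.R S).ker := by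
  rw [K, AddSubgroup.closure_le]
  rintro v ⟨r, rfl | rfl⟩ <;>
    simp only [SetLike.mem_coe, AddMonoidHom.mem_ker, intSumHom_apply,
      Finset.sum_sub_distrib, Finset.sum_ite_eq', Finset.mem_univ, if_true]
  · rw [sum_M1_col]; push_cast; rw [hm]; ring
  · rw [sum_M2_col]; push_cast; rw [hn]; ring

end VHDatum

/-- with `k = gcd(m−2, n−2)`, there is a homomorphism
`φ : C → ℤ/kℤ` sending the class of each `δ_r` to `1`; it sends the class `e`
of `Σ_r δ_r` to `4`. -/
theorem VHDatum.exists_hom_to_zmod (D : VHDatum m n A B) :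
    ∃ φ : ((D.R → ℤ) ⧸ D.K) →+ ZMod (Nat.gcd (m - 2) (n - 2)),
      (∀ r : D.R,
        φ (QuotientAddGroup.mk (fun s => if s = r then (1 : ℤ) else 0)) = 1) ∧
      φ (QuotientAddGroup.mk (fun _ => (1 : ℤ))) = 4 := by
  have hm : (m : ZMod (Nat.gcd (m - 2) (n - 2))) = 2 :=
    ZMod.natCast_eq_two_of_dvd_sub (by linarith [D.four_le_m]) (Nat.gcd_dvd_left _ _)
  have hn : (n : ZMod (Nat.gcd (m - 2) (n - 2))) = 2 :=
    ZMod.natCast_eq_two_of_dvd_sub (by linarith [D.four_le_n]) (Nat.gcd_dvd_right _ _)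
  refine ⟨QuotientAddGroup.lift D.K _ (D.K_le_ker_intSumHom hm hn), fun r => ?_, ?_⟩
  · simp [intSumHom_apply]
  · rw [QuotientAddGroup.lift_mk, intSumHom_apply, Finset.sum_const, Finset.card_univ,
      D.card_R, nsmul_one]
    push_cast
    rw [hm, hn]
    norm_num
end
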